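/- arXiv:1211.4613 — 8 statements merged into one kernel-verified Lean document; each statement's English description precedes it below -/
import Mathlib

section
/- For every index i with q_i > h_{i0}, assuming g_j > 0 for all j, and for all sequences s = (s_j), t = (t_j) with 0 ≤ s_j ≤ 1 and 0 ≤ t_j ≤ 1, the skeleton generating function F_i(s,t) := (f_i(s(1−q)+tq) − f_i(tq))/(1−q_i), where s(1−q)+tq denotes the sequence with entries s_j(1−q_j)+t_j q_j, satisfies the factorization F_i(s,t) = ∑_j [ h̃_{ij} s_j / (1+m − m̃ ∑_k g̃_k s_k − (m−m̃) ∑_k ĝ_k t_k) ] · ( h_{ij0} + (∑_k h_{ijk} t_k)/(1+m̂ − m̂ ∑_k ĝ_k t_k) ), where h_{ij0} := h_{ij}/(h_{ij}+m g_j(q_i−h_{i0})) and h_{ijk} := m g_j q_i ĥ_{ik}/(h_{ij}+m g_j(q_i−h_{i0})). -/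
set_option maxHeartbeats 1200000


/-- The linear-fractional generating function
`f_i(s) = h_{i0} + (∑_j h_{ij} s_j) / (1 + m - m ∑_j g_j s_j)` with `h_{i0} = 1 - ∑_j h_{ij}`. -/
noncomputable def lfGen (H : ℕ → ℕ → ℝ) (g : ℕ → ℝ) (m : ℝ) (i : ℕ) (s : ℕ → ℝ) : ℝ :=
  (1 - ∑' j, H i j) + (∑' j, H i j * s j) / (1 + m - m * ∑' j, g j * s j)

/-- factorization of the skeleton joint generating function
`F_i(s,t) = (f_i(s(1-q)+tq) - f_i(tq))/(1-q_i)`. -/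
theorem skeleton_generating_function_factorization
    (H : ℕ → ℕ → ℝ) (g q : ℕ → ℝ) (m ρ : ℝ)
    (hH : ∀ i j, 0 ≤ H i j) (hHsum : ∀ i, Summable (H i)) (hHrow : ∀ i, ∑' j, H i j ≤ 1)
    (hg : ∀ j, 0 < g j) (hgsum : Summable g) (hg1 : ∑' j, g j = 1)
    (hm : 0 < m) (hρ1 : 1 < ρ) (hρm : ρ < 1 + m)
    (hq0 : ∀ i, 0 < q i) (hq1 : ∀ i, q i < 1)
    (hfix : ∀ i, lfGen H g m i q = q i)
    (hgq : ∑' j, g j * q j = (1 + m - ρ) / m)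
    (i : ℕ) (hqi : 1 - ∑' l, H i l < q i)
    (s t : ℕ → ℝ) (hs : ∀ j, s j ∈ Set.Icc (0:ℝ) 1) (ht : ∀ j, t j ∈ Set.Icc (0:ℝ) 1) :
    (lfGen H g m i (fun j => s j * (1 - q j) + t j * q j) - lfGen H g m i (fun j => t j * q j))
        / (1 - q i)
      = ∑' j,
          (((1 - q j) * (H i j + m * g j * (q i - (1 - ∑' l, H i l))) / (1 - q i)) * s j
            / (1 + m
                - (ρ - 1) * ∑' k, (m * g k * (1 - q k) / (ρ - 1)) * s k
                - (m - (ρ - 1)) * ∑' k, (m * g k * q k / (1 + m - ρ)) * t k))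
          * (H i j / (H i j + m * g j * (q i - (1 - ∑' l, H i l)))
              + (∑' k, (m * g j * q i * (H i k * q k / (q i * ρ))
                    / (H i j + m * g j * (q i - (1 - ∑' l, H i l)))) * t k)
                / (1 + (1 + m - ρ) / ρ
                    - (1 + m - ρ) / ρ * ∑' k, (m * g k * q k / (1 + m - ρ)) * t k)) := by
  have hρ0 : (0:ℝ) < ρ := by linarith
  have hρ0' : ρ ≠ 0 := ne_of_gt hρ0
  have hρ1' : ρ - 1 ≠ 0 := by intro h; nlinarith
  have hmρ : (0:ℝ) < 1 + m - ρ := by linarith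
  have hmρ' : 1 + m - ρ ≠ 0 := ne_of_gt hmρ
  have h1qi : (0:ℝ) < 1 - q i := by linarith [hq1 i]
  have h1qi' : 1 - q i ≠ 0 := ne_of_gt h1qi
  have hqipos := hq0 i
  -- bounds on the building blocks
  have hw1 : ∀ k, 0 ≤ s k * (1 - q k) := fun k =>
    mul_nonneg (hs k).1 (by linarith [hq1 k])
  have hw2 : ∀ k, 0 ≤ t k * q k := fun k =>
    mul_nonneg (ht k).1 (le_of_lt (hq0 k))
  have hw1le : ∀ k, s k * (1 - q k) ≤ 1 := by
    intro k
    nlinarith [(hs k).1, (hs k).2, hq0 k, hq1 k]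
  have hw2le : ∀ k, t k * q k ≤ 1 := by
    intro k
    nlinarith [(ht k).1, (ht k).2, hq0 k, hq1 k]
  have hwle : ∀ k, s k * (1 - q k) + t k * q k ≤ 1 := by
    intro k
    nlinarith [(hs k).1, (hs k).2, (ht k).1, (ht k).2, hq0 k, hq1 k]
  -- summability
  have hgnn : ∀ k, 0 ≤ g k := fun k => (hg k).le
  have hS1s : Summable (fun k => g k * (s k * (1 - q k))) :=
    Summable.of_nonneg_of_le (fun k => mul_nonneg (hgnn k) (hw1 k))
      (fun k => mul_le_of_le_one_right (hgnn k) (hw1le k)) hgsum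
  have hS2s : Summable (fun k => g k * (t k * q k)) :=
    Summable.of_nonneg_of_le (fun k => mul_nonneg (hgnn k) (hw2 k))
      (fun k => mul_le_of_le_one_right (hgnn k) (hw2le k)) hgsum
  have hA1s : Summable (fun k => H i k * (s k * (1 - q k))) :=
    Summable.of_nonneg_of_le (fun k => mul_nonneg (hH i k) (hw1 k))
      (fun k => mul_le_of_le_one_right (hH i k) (hw1le k)) (hHsum i)
  have hA2s : Summable (fun k => H i k * (t k * q k)) :=
    Summable.of_nonneg_of_le (fun k => mul_nonneg (hH i k) (hw2 k))
      (fun k => mul_le_of_le_one_right (hH i k) (hw2le k)) (hHsum i)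
  simp only [lfGen]
  set h0 : ℝ := 1 - ∑' l, H i l with hh0def
  have hc : ∀ j, 0 < H i j + m * g j * (q i - h0) := by
    intro j
    have h1 : 0 < m * g j * (q i - h0) := by
      have := hg j
      have : 0 < q i - h0 := by linarith [hqi]
      positivity
    linarith [hH i j]
  have hc' : ∀ j, H i j + m * g j * (q i - h0) ≠ 0 := fun j => ne_of_gt (hc j)
  set S1 : ℝ := ∑' k, g k * (s k * (1 - q k)) with hS1def
  set S2 : ℝ := ∑' k, g k * (t k * q k) with hS2def
  set A1 : ℝ := ∑' k, H i k * (s k * (1 - q k)) with hA1def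
  set A2 : ℝ := ∑' k, H i k * (t k * q k) with hA2def
  -- bounds on the sums
  have hS1nn : 0 ≤ S1 := tsum_nonneg (fun k => mul_nonneg (hgnn k) (hw1 k))
  have hS2nn : 0 ≤ S2 := tsum_nonneg (fun k => mul_nonneg (hgnn k) (hw2 k))
  have hS12 : S1 + S2 ≤ 1 := by
    have h : ∑' k, (g k * (s k * (1 - q k)) + g k * (t k * q k)) ≤ ∑' k, g k := by
      refine Summable.tsum_le_tsum (fun k => ?_) (hS1s.add hS2s) hgsum
      nlinarith [mul_nonneg (hgnn k) (sub_nonneg.mpr (hwle k))]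
    rw [Summable.tsum_add hS1s hS2s, hg1] at h
    exact h
  have hDu : (0:ℝ) < 1 + m - m * (S1 + S2) := by nlinarith
  have hDu' : 1 + m - m * (S1 + S2) ≠ 0 := ne_of_gt hDu
  have hDv : (0:ℝ) < 1 + m - m * S2 := by nlinarith
  have hDv' : 1 + m - m * S2 ≠ 0 := ne_of_gt hDv
  clear_value h0 S1 S2 A1 A2
  -- rewrite the scalar tsums appearing in the goal
  have e1 : ∑' k, (m * g k * (1 - q k) / (ρ - 1)) * s k = m / (ρ - 1) * S1 := by
    rw [hS1def, ← tsum_mul_left]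
    exact tsum_congr fun k => by ring
  have e2 : ∑' k, (m * g k * q k / (1 + m - ρ)) * t k = m / (1 + m - ρ) * S2 := by
    rw [hS2def, ← tsum_mul_left]
    exact tsum_congr fun k => by ring
  have eHu : ∑' j, H i j * (s j * (1 - q j) + t j * q j) = A1 + A2 := by
    rw [hA1def, hA2def, ← Summable.tsum_add hA1s hA2s]
    exact tsum_congr fun k => by ring
  have eGu : ∑' j, g j * (s j * (1 - q j) + t j * q j) = S1 + S2 := by
    rw [hS1def, hS2def, ← Summable.tsum_add hS1s hS2s]
    exact tsum_congr fun k => by ring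
  rw [e1, e2, eHu, eGu]
  -- rewrite the right-hand side term by term
  have eRHS : ∀ j : ℕ,
      (((1 - q j) * (H i j + m * g j * (q i - h0)) / (1 - q i)) * s j
          / (1 + m - (ρ - 1) * (m / (ρ - 1) * S1)
              - (m - (ρ - 1)) * (m / (1 + m - ρ) * S2)))
        * (H i j / (H i j + m * g j * (q i - h0))
            + (∑' k, (m * g j * q i * (H i k * q k / (q i * ρ))
                  / (H i j + m * g j * (q i - h0))) * t k)
              / (1 + (1 + m - ρ) / ρ - (1 + m - ρ) / ρ * (m / (1 + m - ρ) * S2)))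
      = ((1 - q i) * (1 + m - m * (S1 + S2)) * (1 + m - m * S2))⁻¹
          * ((1 + m - m * S2) * (H i j * (s j * (1 - q j)))
              + (m * A2) * (g j * (s j * (1 - q j)))) := by
    intro j
    have ein : ∑' k, (m * g j * q i * (H i k * q k / (q i * ρ))
        / (H i j + m * g j * (q i - h0))) * t k
        = (m * g j / (ρ * (H i j + m * g j * (q i - h0)))) * A2 := by
      rw [hA2def, ← tsum_mul_left]
      refine tsum_congr fun k => ?_
      field_simp [hc' j, hρ0', ne_of_gt hqipos]
    rw [ein]
    have hd1 : 1 + m - (ρ - 1) * (m / (ρ - 1) * S1)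
        - (m - (ρ - 1)) * (m / (1 + m - ρ) * S2) = 1 + m - m * (S1 + S2) := by
      field_simp [hρ1', hmρ']
      ring
    have hd2 : 1 + (1 + m - ρ) / ρ - (1 + m - ρ) / ρ * (m / (1 + m - ρ) * S2)
        = (1 + m - m * S2) / ρ := by
      field_simp [hρ0', hmρ']
      ring
    rw [hd1, hd2]
    have hbr : H i j / (H i j + m * g j * (q i - h0))
        + (m * g j / (ρ * (H i j + m * g j * (q i - h0))) * A2)
          / ((1 + m - m * S2) / ρ)
        = (H i j * (1 + m - m * S2) + m * g j * A2)
            / ((H i j + m * g j * (q i - h0)) * (1 + m - m * S2)) := by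
      field_simp [hc' j, hρ0', hDv']
    rw [hbr]
    field_simp [hc' j, h1qi', hDu', hDv']
  rw [tsum_congr eRHS, tsum_mul_left,
    Summable.tsum_add (hA1s.mul_left _) (hS1s.mul_left _), tsum_mul_left, tsum_mul_left,
    ← hA1def, ← hS1def]
  field_simp [h1qi', hDu', hDv']
  ring
end

section
/- For every index i and every sequence s = (s_j) with 0 ≤ s_j ≤ 1, the dual generating function satisfies f_i(sq)/q_i = ĥ_{i0} + (∑_j ĥ_{ij} s_j)/(1+m̂ − m̂ ∑_j ĝ_j s_j), where sq denotes the sequence with entries s_j q_j; moreover ∑_j ĝ_j = 1 and ∑_j ĥ_{ij} = 1 − ĥ_{i0} for every i, so the dual parameters again form a linear-fractional triplet. -/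
/-!
Since `∑_j g_j q_j = (1+m-ρ)/m`, the denominator of `f_i` at `q` is exactly `ρ`, so the
fixed-point equation `f_i(q) = q_i` reads `∑_j h_{ij} q_j = ρ (q_i - h_{i0})`, which is the row-sum
identity of the dual law. The reproduction identity itself is algebra: the dual denominator
`1 + m̂ - m̂ ∑_j ĝ_j s_j` is `(1 + m - m ∑_j g_j s_j q_j) / ρ`.
-/

theorem tsum_eq_mul_tsum_of_eq_mul {f u : ℕ → ℝ} (c : ℝ) (h : ∀ j, f j = c * u j) :
    ∑' j, f j = c * ∑' j, u j := by
  rw [← tsum_mul_left]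
  exact tsum_congr h

section DualLaw

variable {m ρ : ℝ}

theorem dual_denominator_eq (hρ : ρ ≠ 0) (hκ : 1 + m - ρ ≠ 0) (B : ℝ) :
    1 + (1 + m - ρ) / ρ - (1 + m - ρ) / ρ * (m / (1 + m - ρ) * B) = (1 + m - m * B) / ρ := by
  field_simp
  ring

/-- No positivity of the denominator is needed: where it vanishes, both sides reduce to
`h_{i0} / q_i` because `x / 0 = 0`. -/
theorem lfGen_mul_div_eq (H : ℕ → ℕ → ℝ) (g q s : ℕ → ℝ) (i : ℕ)
    (hρ : ρ ≠ 0) (hκ : 1 + m - ρ ≠ 0) (hq : q i ≠ 0) :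
    lfGen H g m i (fun j => s j * q j) / q i
      = (1 - ∑' l, H i l) / q i
        + (∑' j, (H i j * q j / (q i * ρ)) * s j)
          / (1 + (1 + m - ρ) / ρ
              - (1 + m - ρ) / ρ * ∑' j, (m * g j * q j / (1 + m - ρ)) * s j) := by
  have hH : ∑' j, (H i j * q j / (q i * ρ)) * s j = (q i * ρ)⁻¹ * ∑' j, H i j * (s j * q j) :=
    tsum_eq_mul_tsum_of_eq_mul _ fun j => by ring
  have hg : ∑' j, (m * g j * q j / (1 + m - ρ)) * s j
      = m / (1 + m - ρ) * ∑' j, g j * (s j * q j) :=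
    tsum_eq_mul_tsum_of_eq_mul _ fun j => by ring
  rw [hH, hg, dual_denominator_eq hρ hκ, lfGen, add_div]
  congr 1
  field_simp

theorem tsum_dual_offspring_eq_one (g q : ℕ → ℝ) (hm : m ≠ 0) (hκ : 1 + m - ρ ≠ 0)
    (hgq : ∑' j, g j * q j = (1 + m - ρ) / m) :
    ∑' j, m * g j * q j / (1 + m - ρ) = 1 := by
  rw [tsum_eq_mul_tsum_of_eq_mul (m / (1 + m - ρ)) (u := fun j => g j * q j)
    fun j => by ring, hgq]
  field_simp

theorem tsum_mul_eq_of_lfGen_eq (H : ℕ → ℕ → ℝ) (g q : ℕ → ℝ) (i : ℕ) (hm : m ≠ 0)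
    (hρ : ρ ≠ 0) (hfix : lfGen H g m i q = q i) (hgq : ∑' j, g j * q j = (1 + m - ρ) / m) :
    ∑' j, H i j * q j = (q i - (1 - ∑' j, H i j)) * ρ := by
  have hden : 1 + m - m * ((1 + m - ρ) / m) = ρ := by field_simp; ring
  rw [lfGen, hgq, hden] at hfix
  rw [← hfix, add_sub_cancel_left, div_mul_cancel₀ _ hρ]

theorem tsum_dual_row_eq (H : ℕ → ℕ → ℝ) (g q : ℕ → ℝ) (i : ℕ) (hm : m ≠ 0) (hρ : ρ ≠ 0)
    (hq : q i ≠ 0) (hfix : lfGen H g m i q = q i) (hgq : ∑' j, g j * q j = (1 + m - ρ) / m) :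
    ∑' j, H i j * q j / (q i * ρ) = 1 - (1 - ∑' l, H i l) / q i := by
  rw [tsum_eq_mul_tsum_of_eq_mul (q i * ρ)⁻¹ (u := fun j => H i j * q j) fun j => by ring,
    tsum_mul_eq_of_lfGen_eq H g q i hm hρ hfix hgq]
  field_simp

end DualLaw

theorem dual_reproduction_law_is_linear_fractional_general
    (H : ℕ → ℕ → ℝ) (g q : ℕ → ℝ) (m ρ : ℝ)
    (hm : 0 < m) (hρ1 : 1 < ρ) (hρm : ρ < 1 + m)
    (hq0 : ∀ i, 0 < q i)
    (hfix : ∀ i, lfGen H g m i q = q i)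
    (hgq : ∑' j, g j * q j = (1 + m - ρ) / m) :
    (∀ i, ∀ s : ℕ → ℝ, (∀ j, s j ∈ Set.Icc (0:ℝ) 1) →
        lfGen H g m i (fun j => s j * q j) / q i
          = (1 - ∑' l, H i l) / q i
            + (∑' j, (H i j * q j / (q i * ρ)) * s j)
              / (1 + (1 + m - ρ) / ρ
                  - (1 + m - ρ) / ρ * ∑' j, (m * g j * q j / (1 + m - ρ)) * s j))
    ∧ (∑' j, m * g j * q j / (1 + m - ρ)) = 1
    ∧ ∀ i, (∑' j, H i j * q j / (q i * ρ)) = 1 - (1 - ∑' l, H i l) / q i := by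
  have hρ : ρ ≠ 0 := by linarith
  have hκ : 1 + m - ρ ≠ 0 := by linarith
  refine ⟨fun i s _ => lfGen_mul_div_eq H g q s i hρ hκ (hq0 i).ne',
    tsum_dual_offspring_eq_one g q hm.ne' hκ hgq,
    fun i => tsum_dual_row_eq H g q i hm.ne' hρ (hq0 i).ne' (hfix i) hgq⟩

/-- the dual reproduction law `f_i(sq)/q_i` is again linear-fractional, with
parameters `m̂ = (1+m-ρ)/ρ`, `ĝ_j = m g_j q_j/(1+m-ρ)`, `ĥ_{i0} = h_{i0}/q_i`,
`ĥ_{ij} = h_{ij} q_j/(q_i ρ)`; moreover `∑_j ĝ_j = 1` and `∑_j ĥ_{ij} = 1 - ĥ_{i0}`. -/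
theorem dual_reproduction_law_is_linear_fractional
    (H : ℕ → ℕ → ℝ) (g q : ℕ → ℝ) (m ρ : ℝ)
    (hH : ∀ i j, 0 ≤ H i j) (hHsum : ∀ i, Summable (H i)) (hHrow : ∀ i, ∑' j, H i j ≤ 1)
    (hg : ∀ j, 0 ≤ g j) (hgsum : Summable g) (hg1 : ∑' j, g j = 1)
    (hm : 0 < m) (hρ1 : 1 < ρ) (hρm : ρ < 1 + m)
    (hq0 : ∀ i, 0 < q i) (hq1 : ∀ i, q i < 1)
    (hfix : ∀ i, lfGen H g m i q = q i)
    (hgq : ∑' j, g j * q j = (1 + m - ρ) / m) :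
    (∀ i, ∀ s : ℕ → ℝ, (∀ j, s j ∈ Set.Icc (0:ℝ) 1) →
        lfGen H g m i (fun j => s j * q j) / q i
          = (1 - ∑' l, H i l) / q i
            + (∑' j, (H i j * q j / (q i * ρ)) * s j)
              / (1 + (1 + m - ρ) / ρ
                  - (1 + m - ρ) / ρ * ∑' j, (m * g j * q j / (1 + m - ρ)) * s j))
    ∧ (∑' j, m * g j * q j / (1 + m - ρ)) = 1
    ∧ ∀ i, (∑' j, H i j * q j / (q i * ρ)) = 1 - (1 - ∑' l, H i l) / q i :=
  dual_reproduction_law_is_linear_fractional_general H g q m ρ hm hρ1 hρm hq0 hfix hgq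
end

section
/- Assume additionally that ∑_{n≥1} (H^n 1^t)_i < ∞ for every i. Then (ρ−1) ∑_{n≥1} (H^n q^t)_i = ρ(1 − q_i) for every i, i.e. (ρ−1) ∑_{n≥1} H^n q^t = ρ(1^t − q^t). -/
/-- Right action of an infinite matrix on a column vector: `(H y)_i = ∑_j H_{ij} y_j`. -/
noncomputable def matVec (H : ℕ → ℕ → ℝ) (y : ℕ → ℝ) : ℕ → ℝ := fun i => ∑' j, H i j * y j

/-- `k`-fold right action: `(H^k y)_i`. -/
noncomputable def matPow (H : ℕ → ℕ → ℝ) : ℕ → (ℕ → ℝ) → ℕ → ℝ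
  | 0, y => y
  | k + 1, y => matVec H (matPow H k y)

/-- Left action of an infinite matrix on a row vector: `(x H)_j = ∑_i x_i H_{ij}`. -/
noncomputable def vecMat (x : ℕ → ℝ) (H : ℕ → ℕ → ℝ) : ℕ → ℝ := fun j => ∑' i, x i * H i j

/-- `k`-fold left action: `(x H^k)_j`. -/
noncomputable def vecPow (x : ℕ → ℝ) (H : ℕ → ℕ → ℝ) : ℕ → ℕ → ℝ
  | 0 => x
  | k + 1 => vecMat (vecPow x H k) H

section Aux

variable {H : ℕ → ℕ → ℝ}

lemma aux_summable (hH : ∀ i j, 0 ≤ H i j) (hHsum : ∀ i, Summable (H i))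
    {y : ℕ → ℝ} {C : ℝ} (hy : ∀ j, |y j| ≤ C) (i : ℕ) :
    Summable (fun j => H i j * y j) := by
  apply Summable.of_abs
  apply Summable.of_nonneg_of_le (fun j => abs_nonneg _) (fun j => ?_) ((hHsum i).mul_right C)
  rw [abs_mul, abs_of_nonneg (hH i j)]
  exact mul_le_mul_of_nonneg_left (hy j) (hH i j)

lemma matPow_bound (hH : ∀ i j, 0 ≤ H i j) (hHsum : ∀ i, Summable (H i))
    (hHrow : ∀ i, ∑' j, H i j ≤ 1)
    {y : ℕ → ℝ} {C : ℝ} (hC : 0 ≤ C) (hy : ∀ j, |y j| ≤ C) :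
    ∀ n i, |matPow H n y i| ≤ C := by
  intro n
  induction n with
  | zero => exact hy
  | succ n ih =>
    intro i
    have hs := aux_summable hH hHsum ih i
    have h1 : |matPow H (n + 1) y i| ≤ ∑' j, |H i j| * |matPow H n y j| := by
      simpa [matPow, matVec, Real.norm_eq_abs] using
        norm_tsum_le_tsum_norm (f := fun j => H i j * matPow H n y j)
          (by simpa [Real.norm_eq_abs, abs_mul] using hs.abs)
    refine h1.trans ?_
    have h2 : ∑' j, |H i j| * |matPow H n y j| ≤ ∑' j, H i j * C := by
      apply Summable.tsum_le_tsum _ (by simpa [abs_mul] using hs.abs) ((hHsum i).mul_right C)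
      intro j
      rw [abs_of_nonneg (hH i j)]
      exact mul_le_mul_of_nonneg_left (ih j) (hH i j)
    refine h2.trans ?_
    rw [tsum_mul_right]
    calc (∑' j, H i j) * C ≤ 1 * C := by
          apply mul_le_mul_of_nonneg_right (hHrow i) hC
      _ = C := one_mul C

lemma matPow_lin (hH : ∀ i j, 0 ≤ H i j) (hHsum : ∀ i, Summable (H i))
    (hHrow : ∀ i, ∑' j, H i j ≤ 1)
    {y₁ y₂ : ℕ → ℝ} {C₁ C₂ : ℝ} (hC₁ : 0 ≤ C₁) (hC₂ : 0 ≤ C₂)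
    (hy₁ : ∀ j, |y₁ j| ≤ C₁) (hy₂ : ∀ j, |y₂ j| ≤ C₂) (c₁ c₂ : ℝ) :
    ∀ n i, matPow H n (fun j => c₁ * y₁ j + c₂ * y₂ j) i
      = c₁ * matPow H n y₁ i + c₂ * matPow H n y₂ i := by
  intro n
  induction n with
  | zero => intro i; rfl
  | succ n ih =>
    intro i
    have hb₁ := matPow_bound hH hHsum hHrow hC₁ hy₁ n
    have hb₂ := matPow_bound hH hHsum hHrow hC₂ hy₂ n
    have hs₁ := aux_summable hH hHsum hb₁ i
    have hs₂ := aux_summable hH hHsum hb₂ i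
    show ∑' j, H i j * matPow H n (fun j => c₁ * y₁ j + c₂ * y₂ j) j = _
    have step : ∀ j, H i j * matPow H n (fun j => c₁ * y₁ j + c₂ * y₂ j) j
        = c₁ * (H i j * matPow H n y₁ j) + c₂ * (H i j * matPow H n y₂ j) := by
      intro j; rw [ih j]; ring
    rw [tsum_congr step, Summable.tsum_add (hs₁.mul_left c₁) (hs₂.mul_left c₂),
      tsum_mul_left, tsum_mul_left]
    rfl

lemma matPow_succ' (H : ℕ → ℕ → ℝ) (y : ℕ → ℝ) :
    ∀ n, matPow H (n + 1) y = matPow H n (matVec H y) := by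
  intro n
  induction n with
  | zero => rfl
  | succ n ih =>
    show matVec H (matPow H (n + 1) y) = matVec H (matPow H n (matVec H y))
    rw [ih]

lemma matPow_mono (hH : ∀ i j, 0 ≤ H i j) (hHsum : ∀ i, Summable (H i))
    (hHrow : ∀ i, ∑' j, H i j ≤ 1)
    {y z : ℕ → ℝ} {C : ℝ} (hC : 0 ≤ C)
    (hy : ∀ j, |y j| ≤ C) (hz : ∀ j, |z j| ≤ C) (hyz : ∀ j, y j ≤ z j) :
    ∀ n i, matPow H n y i ≤ matPow H n z i := by
  intro n
  induction n with
  | zero => exact hyz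
  | succ n ih =>
    intro i
    have hby := matPow_bound hH hHsum hHrow hC hy n
    have hbz := matPow_bound hH hHsum hHrow hC hz n
    apply Summable.tsum_le_tsum _ (aux_summable hH hHsum hby i) (aux_summable hH hHsum hbz i)
    intro j
    exact mul_le_mul_of_nonneg_left (ih j) (hH i j)

lemma matPow_nonneg (hH : ∀ i j, 0 ≤ H i j) {y : ℕ → ℝ} (hy : ∀ j, 0 ≤ y j) :
    ∀ n i, 0 ≤ matPow H n y i := by
  intro n
  induction n with
  | zero => exact hy
  | succ n ih =>
    intro i
    exact tsum_nonneg (fun j => mul_nonneg (hH i j) (ih j))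

end Aux

/-- if `∑_{n≥1} (H^n 1^t)_i < ∞` for every `i`, then
`(ρ-1) ∑_{n≥1} (H^n q^t)_i = ρ (1 - q_i)` for every `i`. -/
theorem sum_Hn_q_identity
    (H : ℕ → ℕ → ℝ) (g q : ℕ → ℝ) (m ρ : ℝ)
    (hH : ∀ i j, 0 ≤ H i j) (hHsum : ∀ i, Summable (H i)) (hHrow : ∀ i, ∑' j, H i j ≤ 1)
    (hg : ∀ j, 0 ≤ g j) (hgsum : Summable g) (hg1 : ∑' j, g j = 1)
    (hm : 0 < m) (hρ1 : 1 < ρ) (hρm : ρ < 1 + m)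
    (hq0 : ∀ i, 0 < q i) (hq1 : ∀ i, q i < 1)
    (hHq : ∀ i, ∑' j, H i j * q j = ρ * ((∑' j, H i j) - 1 + q i))
    (hgq : ∑' j, g j * q j = (1 + m - ρ) / m)
    (hfin : ∀ i, Summable fun n : ℕ => matPow H (n + 1) (fun _ => 1) i) :
    ∀ i, (ρ - 1) * ∑' n : ℕ, matPow H (n + 1) q i = ρ * (1 - q i) := by
  intro i
  set one : ℕ → ℝ := fun _ => 1 with hone
  have hqb : ∀ j, |q j| ≤ (1 : ℝ) := fun j =>
    abs_le.mpr ⟨by linarith [hq0 j], (hq1 j).le⟩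
  have honeb : ∀ j, |one j| ≤ (1 : ℝ) := fun j => by simp [hone]
  -- (H 1)_j = row sum
  have hHone : ∀ j, matVec H one j = ∑' k, H j k := by
    intro j
    exact tsum_congr (fun k => mul_one _)
  have hHoneb : ∀ j, |matVec H one j| ≤ (1 : ℝ) := by
    intro j
    rw [hHone j, abs_of_nonneg (tsum_nonneg (fun k => hH j k))]
    exact hHrow j
  have hqm1b : ∀ j, |q j - 1| ≤ (1 : ℝ) := by
    intro j
    rw [abs_sub_comm, abs_of_nonneg (by linarith [hq1 j])]
    linarith [hq0 j]
  -- H q = ρ (H 1) + ρ (q - 1)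
  have hHqfun : matVec H q = fun j => ρ * matVec H one j + ρ * (q j - 1) := by
    funext j
    rw [hHone j]
    show ∑' k, H j k * q k = _
    rw [hHq j]; ring
  -- recurrence
  have hrec : ∀ n, matPow H (n + 1) q i
      = ρ * matPow H (n + 1) one i + ρ * matPow H n q i - ρ * matPow H n one i := by
    intro n
    have h1 : matPow H (n + 1) q i = matPow H n (matVec H q) i := by
      rw [matPow_succ']
    rw [h1, hHqfun]
    have h2 := matPow_lin hH hHsum hHrow (zero_le_one) (zero_le_one)
      hHoneb hqm1b ρ ρ n i
    rw [h2, ← matPow_succ']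
    have h3 : matPow H n (fun j => q j - 1) i = matPow H n q i - matPow H n one i := by
      have h4 := matPow_lin hH hHsum hHrow (zero_le_one) (zero_le_one)
        hqb honeb 1 (-1) n i
      have h5 : (fun j => (1 : ℝ) * q j + (-1) * one j) = fun j => q j - 1 := by
        funext j; simp [hone]; ring
      rw [h5] at h4
      rw [h4]; ring
    rw [h3]; ring
  -- summability
  have hb : Summable (fun n : ℕ => matPow H (n + 1) one i) := hfin i
  have ha : Summable (fun n : ℕ => matPow H (n + 1) q i) := by
    apply Summable.of_nonneg_of_le _ _ hb
    · intro n
      exact matPow_nonneg hH (fun j => (hq0 j).le) (n + 1) i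
    · intro n
      exact matPow_mono hH hHsum hHrow (zero_le_one) hqb honeb
        (fun j => (hq1 j).le) (n + 1) i
  have ha' : Summable (fun n : ℕ => matPow H n q i) :=
    (summable_nat_add_iff 1).mp ha
  have hb' : Summable (fun n : ℕ => matPow H n one i) :=
    (summable_nat_add_iff 1).mp hb
  set S := ∑' n : ℕ, matPow H (n + 1) q i with hS
  set B := ∑' n : ℕ, matPow H (n + 1) one i with hB
  have hsum : S = ρ * B + ρ * (∑' n : ℕ, matPow H n q i)
      - ρ * (∑' n : ℕ, matPow H n one i) := by
    rw [hS, tsum_congr hrec, Summable.tsum_sub ((hb.mul_left ρ).add (ha'.mul_left ρ))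
      (hb'.mul_left ρ), Summable.tsum_add (hb.mul_left ρ) (ha'.mul_left ρ),
      tsum_mul_left, tsum_mul_left, tsum_mul_left]
  have hTa : (∑' n : ℕ, matPow H n q i) = q i + S := by
    rw [Summable.tsum_eq_zero_add ha']
    rfl
  have hTb : (∑' n : ℕ, matPow H n one i) = 1 + B := by
    rw [Summable.tsum_eq_zero_add hb']
    rfl
  rw [hTa, hTb] at hsum
  linear_combination -hsum
end

section
/- Assume additionally that μ := m ∑_{n≥1} g H^n 1^t < ∞. Then m ∑_{n≥1} g H^n q^t = ρ. -/
/-! With `A n = g Hⁿ 1ᵗ` and `B n = g Hⁿ qᵗ`, pairing the relation `Hq = ρ (H1 - 1 + q)` with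
`g Hⁿ` gives `B (n + 1) = ρ (A (n + 1) - A n + B n)`. Summing over `n`, the `A`-terms telescope to
`-A 0 = -1` because `∑ A n < ∞`, so `S = ∑ B (n + 1)` satisfies `S = ρ (B 0 - 1 + S)` with
`B 0 = (1 + m - ρ) / m`, that is `(1 - ρ) (m S - ρ) = 0`. Exchanging the order of summation in
`(x H) yᵗ = x (H y)ᵗ` is legitimate since all terms are nonnegative, `H` is substochastic and
`0 ≤ y ≤ 1`. -/

lemma summable_mul_of_le_one {ι : Type*} {x y : ι → ℝ} (hx0 : ∀ i, 0 ≤ x i) (hx : Summable x)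
    (hy0 : ∀ i, 0 ≤ y i) (hy1 : ∀ i, y i ≤ 1) : Summable fun i => x i * y i :=
  hx.of_nonneg_of_le (fun i => mul_nonneg (hx0 i) (hy0 i))
    (fun i => mul_le_of_le_one_right (hx0 i) (hy1 i))

lemma tsum_mul_le_of_le_one {ι : Type*} {x y : ι → ℝ} (hx0 : ∀ i, 0 ≤ x i) (hx : Summable x)
    (hy0 : ∀ i, 0 ≤ y i) (hy1 : ∀ i, y i ≤ 1) : ∑' i, x i * y i ≤ ∑' i, x i :=
  (summable_mul_of_le_one hx0 hx hy0 hy1).tsum_le_tsum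
    (fun i => mul_le_of_le_one_right (hx0 i) (hy1 i)) hx

section SubstochasticMatrix

variable {H : ℕ → ℕ → ℝ}

lemma matVec_nonneg (hH : ∀ i j, 0 ≤ H i j) {y : ℕ → ℝ} (hy0 : ∀ j, 0 ≤ y j) (i : ℕ) :
    0 ≤ matVec H y i :=
  tsum_nonneg fun j => mul_nonneg (hH i j) (hy0 j)

lemma matVec_le_one (hH : ∀ i j, 0 ≤ H i j) (hHsum : ∀ i, Summable (H i))
    (hHrow : ∀ i, ∑' j, H i j ≤ 1) {y : ℕ → ℝ} (hy0 : ∀ j, 0 ≤ y j) (hy1 : ∀ j, y j ≤ 1)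
    (i : ℕ) : matVec H y i ≤ 1 :=
  (tsum_mul_le_of_le_one (hH i) (hHsum i) hy0 hy1).trans (hHrow i)

theorem hasSum_vecMat_mul (hH : ∀ i j, 0 ≤ H i j) (hHsum : ∀ i, Summable (H i))
    (hHrow : ∀ i, ∑' j, H i j ≤ 1) {x y : ℕ → ℝ} (hx0 : ∀ i, 0 ≤ x i) (hx : Summable x)
    (hy0 : ∀ j, 0 ≤ y j) (hy1 : ∀ j, y j ≤ 1) :
    HasSum (fun j => vecMat x H j * y j) (∑' i, x i * matVec H y i) := by
  set F : ℕ × ℕ → ℝ := fun p => x p.1 * H p.1 p.2 * y p.2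
  have hF0 : 0 ≤ F := fun p => mul_nonneg (mul_nonneg (hx0 _) (hH _ _)) (hy0 _)
  have hrow : ∀ i, HasSum (fun j => F (i, j)) (x i * matVec H y i) := fun i => by
    simpa only [F, matVec, mul_assoc] using
      ((summable_mul_of_le_one (hH i) (hHsum i) hy0 hy1).hasSum.mul_left (x i))
  have hF : Summable F := (summable_prod_of_nonneg hF0).2
    ⟨fun i => (hrow i).summable, by
      simpa only [(hrow _).tsum_eq] using summable_mul_of_le_one hx0 hx
        (matVec_nonneg hH hy0) (matVec_le_one hH hHsum hHrow hy0 hy1)⟩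
  have hcol : ∀ j, HasSum (fun i => F (i, j)) (vecMat x H j * y j) := fun j =>
    by simpa only [F, Prod.swap, vecMat, tsum_mul_right] using (hF.prod_symm.prod_factor j).hasSum
  have htot : HasSum F (∑' i, x i * matVec H y i) :=
    (hF.hasSum.prod_fiberwise hrow).tsum_eq ▸ hF.hasSum
  exact ((Equiv.prodComm ℕ ℕ).hasSum_iff.2 htot).prod_fiberwise hcol


lemma vecMat_nonneg (hH : ∀ i j, 0 ≤ H i j) {x : ℕ → ℝ} (hx0 : ∀ i, 0 ≤ x i) (j : ℕ) :
    0 ≤ vecMat x H j :=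
  tsum_nonneg fun i => mul_nonneg (hx0 i) (hH i j)

lemma hasSum_vecMat (hH : ∀ i j, 0 ≤ H i j) (hHsum : ∀ i, Summable (H i))
    (hHrow : ∀ i, ∑' j, H i j ≤ 1) {x : ℕ → ℝ} (hx0 : ∀ i, 0 ≤ x i) (hx : Summable x) :
    HasSum (vecMat x H) (∑' i, x i * ∑' j, H i j) := by
  simpa [matVec] using
    hasSum_vecMat_mul hH hHsum hHrow hx0 hx (y := fun _ => 1) (fun _ => zero_le_one) fun _ => le_rfl

lemma vecPow_nonneg (hH : ∀ i j, 0 ≤ H i j) {x : ℕ → ℝ} (hx0 : ∀ i, 0 ≤ x i) (n j : ℕ) :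
    0 ≤ vecPow x H n j := by
  induction n generalizing j with
  | zero => exact hx0 j
  | succ n ih => exact vecMat_nonneg hH ih j

lemma summable_vecPow (hH : ∀ i j, 0 ≤ H i j) (hHsum : ∀ i, Summable (H i))
    (hHrow : ∀ i, ∑' j, H i j ≤ 1) {x : ℕ → ℝ} (hx0 : ∀ i, 0 ≤ x i) (hx : Summable x)
    (n : ℕ) : Summable (vecPow x H n) := by
  induction n with
  | zero => exact hx
  | succ n ih => exact (hasSum_vecMat hH hHsum hHrow (vecPow_nonneg hH hx0 n) ih).summable

lemma tsum_vecMat_mul_of_matVec_eq (hH : ∀ i j, 0 ≤ H i j) (hHsum : ∀ i, Summable (H i))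
    (hHrow : ∀ i, ∑' j, H i j ≤ 1) {x y : ℕ → ℝ} {ρ : ℝ} (hx0 : ∀ i, 0 ≤ x i)
    (hx : Summable x) (hy0 : ∀ j, 0 ≤ y j) (hy1 : ∀ j, y j ≤ 1)
    (hHy : ∀ i, matVec H y i = ρ * (∑' j, H i j - 1 + y i)) :
    ∑' j, vecMat x H j * y j = ρ * (∑' j, vecMat x H j - ∑' i, x i + ∑' i, x i * y i) := by
  have hxH : Summable fun i => x i * ∑' j, H i j :=
    summable_mul_of_le_one hx0 hx (fun i => tsum_nonneg (hH i)) hHrow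
  have hxy : Summable fun i => x i * y i := summable_mul_of_le_one hx0 hx hy0 hy1
  rw [(hasSum_vecMat_mul hH hHsum hHrow hx0 hx hy0 hy1).tsum_eq,
    (hasSum_vecMat hH hHsum hHrow hx0 hx).tsum_eq, ← hxH.tsum_sub hx, ← (hxH.sub hx).tsum_add hxy,
    ← tsum_mul_left]
  exact tsum_congr fun i => by rw [hHy]; ring

end SubstochasticMatrix

lemma tsum_succ_eq_of_rec {A B : ℕ → ℝ} {ρ : ℝ} (hA : Summable A) (hB : Summable B)
    (hrec : ∀ n, B (n + 1) = ρ * (A (n + 1) - A n + B n)) :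
    ∑' n, B (n + 1) = ρ * (B 0 - A 0 + ∑' n, B (n + 1)) := by
  have hA' : Summable fun n => A (n + 1) := (summable_nat_add_iff 1).2 hA
  calc ∑' n, B (n + 1) = ρ * ∑' n, (A (n + 1) - A n + B n) := by
        rw [← tsum_mul_left]; exact tsum_congr hrec
    _ = ρ * (∑' n, A (n + 1) - ∑' n, A n + ∑' n, B n) := by
        rw [(hA'.sub hA).tsum_add hB, hA'.tsum_sub hA]
    _ = ρ * (B 0 - A 0 + ∑' n, B (n + 1)) := by
        rw [hA.tsum_eq_zero_add, hB.tsum_eq_zero_add]; ring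

theorem sum_gHn_q_identity_general
    (H : ℕ → ℕ → ℝ) (g q : ℕ → ℝ) (m ρ : ℝ)
    (hH : ∀ i j, 0 ≤ H i j) (hHsum : ∀ i, Summable (H i)) (hHrow : ∀ i, ∑' j, H i j ≤ 1)
    (hg : ∀ j, 0 ≤ g j) (hgsum : Summable g) (hg1 : ∑' j, g j = 1)
    (hm : 0 < m) (hρ1 : 1 < ρ)
    (hq0 : ∀ i, 0 < q i) (hq1 : ∀ i, q i < 1)
    (hHq : ∀ i, ∑' j, H i j * q j = ρ * ((∑' j, H i j) - 1 + q i))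
    (hgq : ∑' j, g j * q j = (1 + m - ρ) / m)
    (hμfin : Summable fun n : ℕ => ∑' j, vecPow g H (n + 1) j) :
    m * ∑' n : ℕ, (∑' j, vecPow g H (n + 1) j * q j) = ρ := by
  have hx0 := vecPow_nonneg hH hg
  have hx := summable_vecPow hH hHsum hHrow hg hgsum
  have hq0' : ∀ j, 0 ≤ q j := fun j => (hq0 j).le
  have hq1' : ∀ j, q j ≤ 1 := fun j => (hq1 j).le
  set A : ℕ → ℝ := fun n => ∑' j, vecPow g H n j
  set B : ℕ → ℝ := fun n => ∑' j, vecPow g H n j * q j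
  have hA : Summable A := (summable_nat_add_iff 1).1 hμfin
  have hB : Summable B := hA.of_nonneg_of_le
    (fun n => tsum_nonneg fun j => mul_nonneg (hx0 n j) (hq0' j))
    (fun n => tsum_mul_le_of_le_one (hx0 n) (hx n) hq0' hq1')
  have hrec : ∀ n, B (n + 1) = ρ * (A (n + 1) - A n + B n) := fun n =>
    tsum_vecMat_mul_of_matVec_eq hH hHsum hHrow (hx0 n) (hx n) hq0' hq1' hHq
  have hS := tsum_succ_eq_of_rec hA hB hrec
  change m * ∑' n, B (n + 1) = ρ
  rw [show A 0 = 1 from hg1, show B 0 = (1 + m - ρ) / m from hgq] at hS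
  have hfactor : (1 - ρ) * (m * ∑' n, B (n + 1) - ρ) = 0 := by
    field_simp at hS; linarith
  exact sub_eq_zero.1 ((mul_eq_zero.1 hfactor).resolve_left (by linarith))

/-- if `μ := m ∑_{n≥1} g H^n 1^t < ∞`, then `m ∑_{n≥1} g H^n q^t = ρ`. -/
theorem sum_gHn_q_identity
    (H : ℕ → ℕ → ℝ) (g q : ℕ → ℝ) (m ρ : ℝ)
    (hH : ∀ i j, 0 ≤ H i j) (hHsum : ∀ i, Summable (H i)) (hHrow : ∀ i, ∑' j, H i j ≤ 1)
    (hg : ∀ j, 0 ≤ g j) (hgsum : Summable g) (hg1 : ∑' j, g j = 1)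
    (hm : 0 < m) (hρ1 : 1 < ρ) (hρm : ρ < 1 + m)
    (hq0 : ∀ i, 0 < q i) (hq1 : ∀ i, q i < 1)
    (hHq : ∀ i, ∑' j, H i j * q j = ρ * ((∑' j, H i j) - 1 + q i))
    (hgq : ∑' j, g j * q j = (1 + m - ρ) / m)
    (hμfin : Summable fun n : ℕ => ∑' j, vecPow g H (n + 1) j) :
    m * ∑' n : ℕ, (∑' j, vecPow g H (n + 1) j * q j) = ρ :=
  sum_gHn_q_identity_general H g q m ρ hH hHsum hHrow hg hgsum hg1 hm hρ1 hq0 hq1 hHq hgq hμfin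
end

section
/- Assume additionally that μ := m ∑_{n≥1} g H^n 1^t < ∞. Then the dual triplet satisfies the Perron–Frobenius equation at 1/ρ: m̂ ∑_{n≥1} ρ^n ĝ Ĥ^n 1^t = 1, where Ĥ = (ĥ_{ij}). -/
section Weights

variable {ι : Type*} {f w : ι → ℝ}

lemma Summable.mul_of_le_one (hf : Summable f) (hf0 : ∀ i, 0 ≤ f i) (hw0 : ∀ i, 0 ≤ w i)
    (hw1 : ∀ i, w i ≤ 1) : Summable fun i => f i * w i :=
  hf.of_nonneg_of_le (fun i => mul_nonneg (hf0 i) (hw0 i))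
    fun i => mul_le_of_le_one_right (hf0 i) (hw1 i)

lemma tsum_mul_le_of_le_one_s6 (hf : Summable f) (hf0 : ∀ i, 0 ≤ f i) (hw0 : ∀ i, 0 ≤ w i)
    (hw1 : ∀ i, w i ≤ 1) : ∑' i, f i * w i ≤ ∑' i, f i :=
  (hf.mul_of_le_one hf0 hw0 hw1).tsum_le_tsum
    (fun i => mul_le_of_le_one_right (hf0 i) (hw1 i)) hf

end Weights

section Substochastic

variable {ι κ : Type*} {x : ι → ℝ} {F : ι → κ → ℝ}

lemma summable_uncurry_mul_of_substochastic (hx : ∀ i, 0 ≤ x i) (hxs : Summable x)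
    (hF : ∀ i j, 0 ≤ F i j) (hFs : ∀ i, Summable (F i)) (hF1 : ∀ i, ∑' j, F i j ≤ 1) :
    Summable fun p : ι × κ => x p.1 * F p.1 p.2 := by
  refine (summable_prod_of_nonneg fun p => mul_nonneg (hx _) (hF _ _)).mpr
    ⟨fun i => (hFs i).mul_left (x i), ?_⟩
  simp only [tsum_mul_left]
  exact hxs.mul_of_le_one hx (fun i => tsum_nonneg (hF i)) hF1

lemma summable_tsum_mul_of_substochastic (hx : ∀ i, 0 ≤ x i) (hxs : Summable x)
    (hF : ∀ i j, 0 ≤ F i j) (hFs : ∀ i, Summable (F i)) (hF1 : ∀ i, ∑' j, F i j ≤ 1) :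
    Summable fun j => ∑' i, x i * F i j :=
  (summable_uncurry_mul_of_substochastic hx hxs hF hFs hF1).prod_symm.prod

lemma tsum_tsum_mul_of_substochastic (hx : ∀ i, 0 ≤ x i) (hxs : Summable x)
    (hF : ∀ i j, 0 ≤ F i j) (hFs : ∀ i, Summable (F i)) (hF1 : ∀ i, ∑' j, F i j ≤ 1) :
    ∑' j, ∑' i, x i * F i j = ∑' i, x i * ∑' j, F i j := by
  rw [(summable_uncurry_mul_of_substochastic hx hxs hF hFs hF1).tsum_comm]
  exact tsum_congr fun i => tsum_mul_left

end Substochastic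

section VecPow

variable {x : ℕ → ℝ} {F : ℕ → ℕ → ℝ}

lemma vecPow_nonneg_s6 (hx : ∀ i, 0 ≤ x i) (hF : ∀ i j, 0 ≤ F i j) :
    ∀ n j, 0 ≤ vecPow x F n j
  | 0 => hx
  | n + 1 => fun j => tsum_nonneg fun i => mul_nonneg (vecPow_nonneg_s6 hx hF n i) (hF i j)

lemma summable_vecPow_s6 (hx : ∀ i, 0 ≤ x i) (hxs : Summable x) (hF : ∀ i j, 0 ≤ F i j)
    (hFs : ∀ i, Summable (F i)) (hF1 : ∀ i, ∑' j, F i j ≤ 1) :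
    ∀ n, Summable (vecPow x F n)
  | 0 => hxs
  | n + 1 => summable_tsum_mul_of_substochastic (vecPow_nonneg_s6 hx hF n)
      (summable_vecPow_s6 hx hxs hF hFs hF1 n) hF hFs hF1

lemma tsum_vecMat (hx : ∀ i, 0 ≤ x i) (hxs : Summable x) (hF : ∀ i j, 0 ≤ F i j)
    (hFs : ∀ i, Summable (F i)) (hF1 : ∀ i, ∑' j, F i j ≤ 1) :
    ∑' j, vecMat x F j = ∑' i, x i * ∑' j, F i j :=
  tsum_tsum_mul_of_substochastic hx hxs hF hFs hF1

lemma tsum_vecMat_mul {w : ℕ → ℝ} (hx : ∀ i, 0 ≤ x i) (hxs : Summable x)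
    (hF : ∀ i j, 0 ≤ F i j) (hFs : ∀ i, Summable (F i)) (hF1 : ∀ i, ∑' j, F i j ≤ 1)
    (hw0 : ∀ j, 0 ≤ w j) (hw1 : ∀ j, w j ≤ 1) :
    ∑' j, vecMat x F j * w j = ∑' i, x i * ∑' j, F i j * w j := by
  have hFw : ∀ i j, 0 ≤ F i j * w j := fun i j => mul_nonneg (hF i j) (hw0 j)
  have hFws : ∀ i, Summable fun j => F i j * w j :=
    fun i => (hFs i).mul_of_le_one (hF i) hw0 hw1
  have hFw1 : ∀ i, ∑' j, F i j * w j ≤ 1 :=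
    fun i => (tsum_mul_le_of_le_one_s6 (hFs i) (hF i) hw0 hw1).trans (hF1 i)
  rw [← tsum_vecMat hx hxs hFw hFws hFw1]
  simp only [vecMat, ← tsum_mul_right, mul_assoc]

lemma tsum_vecMat_mul_of_eigen {q : ℕ → ℝ} {ρ : ℝ} (hx : ∀ i, 0 ≤ x i) (hxs : Summable x)
    (hF : ∀ i j, 0 ≤ F i j) (hFs : ∀ i, Summable (F i)) (hF1 : ∀ i, ∑' j, F i j ≤ 1)
    (hq0 : ∀ j, 0 ≤ q j) (hq1 : ∀ j, q j ≤ 1)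
    (hFq : ∀ i, ∑' j, F i j * q j = ρ * ((∑' j, F i j) - 1 + q i)) :
    ∑' j, vecMat x F j * q j
      = ρ * (∑' j, vecMat x F j - ∑' i, x i + ∑' i, x i * q i) := by
  have hxr : Summable fun i => x i * ∑' j, F i j :=
    hxs.mul_of_le_one hx (fun i => tsum_nonneg (hF i)) hF1
  have hxq : Summable fun i => x i * q i := hxs.mul_of_le_one hx hq0 hq1
  rw [tsum_vecMat_mul hx hxs hF hFs hF1 hq0 hq1, tsum_vecMat hx hxs hF hFs hF1,
    tsum_congr fun i => by rw [hFq i]]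
  calc ∑' i, x i * (ρ * ((∑' j, F i j) - 1 + q i))
      = ∑' i, ρ * (x i * ∑' j, F i j - x i + x i * q i) := tsum_congr fun i => by ring
    _ = _ := by rw [tsum_mul_left, (hxr.sub hxs).tsum_add hxq, hxr.tsum_sub hxs]

lemma vecPow_const_mul (c : ℝ) (x : ℕ → ℝ) (F : ℕ → ℕ → ℝ) :
    ∀ n j, vecPow (fun l => c * x l) F n j = c * vecPow x F n j
  | 0, _ => rfl
  | n + 1, j => by
    simp only [vecPow, vecMat, vecPow_const_mul c x F n, mul_assoc, tsum_mul_left]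

/-- Doob `h`-transform of `F` by `q`. -/
lemma vecPow_conj {q : ℕ → ℝ} (ρ : ℝ) (hq : ∀ i, q i ≠ 0) (x : ℕ → ℝ) (F : ℕ → ℕ → ℝ) :
    ∀ n j, vecPow (fun l => x l * q l) (fun i j => F i j * q j / (q i * ρ)) n j
      = vecPow x F n j * q j / ρ ^ n
  | 0, j => by simp [vecPow]
  | n + 1, j => by
    simp only [vecPow, vecMat, vecPow_conj ρ hq x F n]
    rw [← tsum_mul_right, ← tsum_div_const]
    refine tsum_congr fun i => ?_
    have hqi := hq i
    field_simp
    ring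

end VecPow

lemma tsum_succ_of_recurrence {a s : ℕ → ℝ} {ρ : ℝ} (ha : Summable a) (hs : Summable s)
    (hrec : ∀ n, a (n + 1) = ρ * (s (n + 1) - s n + a n)) :
    (1 - ρ) * ∑' n, a (n + 1) = ρ * (a 0 - s 0) := by
  have hs' : Summable fun n => s (n + 1) := (summable_nat_add_iff 1).mpr hs
  have ha' : Summable fun n => a (n + 1) := (summable_nat_add_iff 1).mpr ha
  have hsum : ∑' n, a (n + 1) = ρ * (∑' n, s (n + 1) - ∑' n, s n + ∑' n, a n) := by
    rw [tsum_congr hrec, tsum_mul_left, (hs'.sub hs).tsum_add ha, hs'.tsum_sub hs]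
  rw [hs.tsum_eq_zero_add, ha.tsum_eq_zero_add] at hsum
  linear_combination hsum

/-- if `μ := m ∑_{n≥1} g H^n 1^t < ∞`, then the dual triplet satisfies the
Perron–Frobenius equation at `1/ρ`: `m̂ ∑_{n≥1} ρ^n ĝ Ĥ^n 1^t = 1`, where
`m̂ = (1+m-ρ)/ρ`, `ĝ_j = m g_j q_j/(1+m-ρ)` and `ĥ_{ij} = h_{ij} q_j/(q_i ρ)`. -/
theorem dual_PF_equation
    (H : ℕ → ℕ → ℝ) (g q : ℕ → ℝ) (m ρ : ℝ)
    (hH : ∀ i j, 0 ≤ H i j) (hHsum : ∀ i, Summable (H i)) (hHrow : ∀ i, ∑' j, H i j ≤ 1)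
    (hg : ∀ j, 0 ≤ g j) (hgsum : Summable g) (hg1 : ∑' j, g j = 1)
    (hm : 0 < m) (hρ1 : 1 < ρ) (hρm : ρ < 1 + m)
    (hq0 : ∀ i, 0 < q i) (hq1 : ∀ i, q i < 1)
    (hHq : ∀ i, ∑' j, H i j * q j = ρ * ((∑' j, H i j) - 1 + q i))
    (hgq : ∑' j, g j * q j = (1 + m - ρ) / m)
    (hμfin : Summable fun n : ℕ => ∑' j, vecPow g H (n + 1) j) :
    (1 + m - ρ) / ρ
        * ∑' n : ℕ, ρ ^ (n + 1)
            * ∑' j, vecPow (fun l => m * g l * q l / (1 + m - ρ))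
                (fun i' j' => H i' j' * q j' / (q i' * ρ)) (n + 1) j
      = 1 := by
  have hmρ : 0 < 1 + m - ρ := by linarith
  have hq0' : ∀ j, 0 ≤ q j := fun j => (hq0 j).le
  have hq1' : ∀ j, q j ≤ 1 := fun j => (hq1 j).le
  set P := vecPow g H
  have hP0 : ∀ n j, 0 ≤ P n j := vecPow_nonneg_s6 hg hH
  have hPs : ∀ n, Summable (P n) := summable_vecPow_s6 hg hgsum hH hHsum hHrow
  have hs : Summable fun n => ∑' j, P n j := (summable_nat_add_iff 1).mp hμfin
  have ha : Summable fun n => ∑' j, P n j * q j :=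
    hs.of_nonneg_of_le (fun n => tsum_nonneg fun j => mul_nonneg (hP0 n j) (hq0' j))
      fun n => tsum_mul_le_of_le_one_s6 (hPs n) (hP0 n) hq0' hq1'
  have hrec : ∀ n, ∑' j, P (n + 1) j * q j
      = ρ * (∑' j, P (n + 1) j - ∑' j, P n j + ∑' j, P n j * q j) := fun n =>
    tsum_vecMat_mul_of_eigen (hP0 n) (hPs n) hH hHsum hHrow hq0' hq1' hHq
  have hT : ∑' n, ∑' j, P (n + 1) j * q j = ρ / m := by
    have h := tsum_succ_of_recurrence ha hs hrec
    change _ = ρ * (∑' j, g j * q j - ∑' j, g j) at h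
    rw [hgq, hg1] at h
    refine mul_left_cancel₀ (sub_ne_zero.mpr hρ1.ne) (h.trans ?_)
    field_simp
    ring
  have hdual : ∀ n, ρ ^ (n + 1) * ∑' j, vecPow (fun l => m * g l * q l / (1 + m - ρ))
      (fun i' j' => H i' j' * q j' / (q i' * ρ)) (n + 1) j
      = m / (1 + m - ρ) * ∑' j, P (n + 1) j * q j := by
    intro n
    have hĝ : (fun l => m * g l * q l / (1 + m - ρ)) = fun l => m / (1 + m - ρ) * (g l * q l) :=
      funext fun l => by ring
    simp only [hĝ, vecPow_const_mul, vecPow_conj ρ (fun i => (hq0 i).ne'), tsum_mul_left,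
      tsum_div_const]
    field_simp [(pow_pos (by linarith : (0 : ℝ) < ρ) (n + 1)).ne']
    rfl
  rw [tsum_congr hdual, tsum_mul_left, hT]
  field_simp
end

section
/- Assume additionally that μ := m ∑_{n≥1} g H^n 1^t < ∞. Then β̂ := m̂ ∑_{n≥1} n ρ^n ĝ Ĥ^n 1^t = (μ−1)/(ρ−1), where Ĥ = (ĥ_{ij}). -/
open Filter Topology Finset
open Filter Topology Finset

/-- Tail of a nonneg summable series is at most the total. -/
lemma my_tail_le {f : ℕ → ℝ} (h0 : ∀ n, 0 ≤ f n) (hf : Summable f) (k : ℕ) :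
    ∑' n, f (n + k) ≤ ∑' n, f n := by
  have h := Summable.sum_add_tsum_nat_add (f := f) k hf
  have : 0 ≤ ∑ i ∈ Finset.range k, f i := Finset.sum_nonneg fun i _ => h0 i
  linarith

/-- Fubini for nonnegative kernels with substochastic rows. -/
lemma my_fubini {x : ℕ → ℝ} {K : ℕ → ℕ → ℝ}
    (hx0 : ∀ i, 0 ≤ x i) (hx : Summable x)
    (hK0 : ∀ i j, 0 ≤ K i j) (hKs : ∀ i, Summable (K i)) (hKrow : ∀ i, ∑' j, K i j ≤ 1) :
    Summable (fun j => ∑' i, x i * K i j) ∧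
    Summable (fun i => x i * ∑' j, K i j) ∧
    (∑' j, ∑' i, x i * K i j) = ∑' i, x i * ∑' j, K i j := by
  have hrow : ∀ i, ∑' j, x i * K i j = x i * ∑' j, K i j := fun i => tsum_mul_left
  have hsum2 : Summable (fun i => x i * ∑' j, K i j) := by
    refine Summable.of_nonneg_of_le (fun i => mul_nonneg (hx0 i) (tsum_nonneg fun j => hK0 i j))
      (fun i => ?_) hx
    exact mul_le_of_le_one_right (hx0 i) (hKrow i)
  have h1 : ∀ i, Summable fun j => x i * K i j := fun i => (hKs i).mul_left _
  have hprod : Summable (fun p : ℕ × ℕ => x p.1 * K p.1 p.2) := by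
    refine (summable_prod_of_nonneg ?_).2 ⟨h1, ?_⟩
    · exact fun p => mul_nonneg (hx0 _) (hK0 _ _)
    · simpa only [hrow] using hsum2
  have hswap : (∑' j, ∑' i, x i * K i j) = ∑' i, ∑' j, x i * K i j :=
    Summable.tsum_comm (f := fun i j => x i * K i j) hprod
  have hcolsum : Summable (fun j => ∑' i, x i * K i j) := by
    have hps : Summable (fun p : ℕ × ℕ => x p.2 * K p.2 p.1) := hprod.prod_symm
    exact ((summable_prod_of_nonneg (fun p => mul_nonneg (hx0 _) (hK0 _ _))).1 hps).2
  refine ⟨hcolsum, hsum2, ?_⟩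
  rw [hswap]
  exact tsum_congr hrow

/-- Swap lemma: sum of (shifted) tails equals `∑ n, n * f n`. -/
lemma my_swap {f : ℕ → ℝ} (h0 : ∀ n, 0 ≤ f n) (hf : Summable f)
    (hnf : Summable fun n : ℕ => (n : ℝ) * f n) :
    Summable (fun t : ℕ => ∑' k, f (k + t + 1)) ∧
      ∑' t : ℕ, (∑' k, f (k + t + 1)) = ∑' n : ℕ, (n : ℝ) * f n := by
  set F : ℕ → ℕ → ℝ := fun j t => if t < j then f j else 0 with hFdef
  have hFnn : ∀ j t, 0 ≤ F j t := by
    intro j t; by_cases h : t < j <;> simp [hFdef, h, h0 j]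
  have hFle : ∀ t j, F j t ≤ f j := by
    intro t j; by_cases h : t < j <;> simp [hFdef, h, h0 j]
  have hrow : ∀ j, ∑' t, F j t = (j : ℝ) * f j := by
    intro j
    rw [tsum_eq_sum (s := Finset.range j) (fun t ht => by
      simp only [hFdef]; rw [if_neg]; simpa using ht)]
    simp [hFdef, Finset.sum_ite_of_true, mul_comm]
  have hcolsummable : ∀ t, Summable fun j => F j t :=
    fun t => Summable.of_nonneg_of_le (fun j => hFnn j t) (hFle t) hf
  have hcol : ∀ t, ∑' j, F j t = ∑' k, f (k + t + 1) := by
    intro t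
    have h := (Summable.sum_add_tsum_nat_add (f := fun j => F j t) (t + 1) (hcolsummable t)).symm
    have h1 : ∑ j ∈ Finset.range (t + 1), F j t = 0 := by
      apply Finset.sum_eq_zero; intro j hj
      simp only [hFdef]; rw [if_neg]; simp at hj; omega
    have h2 : ∀ k : ℕ, F (k + (t + 1)) t = f (k + t + 1) := by
      intro k; simp only [hFdef]; rw [if_pos (by omega)]; ring_nf
    rw [h, h1, zero_add]
    exact tsum_congr h2
  have huncurry : Summable (Function.uncurry F) := by
    refine (summable_prod_of_nonneg (fun p => hFnn p.1 p.2)).2 ⟨fun j => ?_, ?_⟩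
    · apply summable_of_ne_finset_zero (s := Finset.range j)
      intro t ht; simp only [hFdef]; rw [if_neg]; simpa using ht
    · simpa only [hrow] using hnf
  have hswap : (∑' t, ∑' j, F j t) = ∑' j, ∑' t, F j t := Summable.tsum_comm huncurry
  have hsummable : Summable fun t => ∑' j, F j t := by
    have hps : Summable (fun p : ℕ × ℕ => F p.2 p.1) := huncurry.prod_symm
    exact ((summable_prod_of_nonneg (fun p => hFnn p.2 p.1)).1 hps).2
  constructor
  · exact hsummable.congr fun t => hcol t
  · calc ∑' t, (∑' k, f (k + t + 1)) = ∑' t, ∑' j, F j t := by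
          exact tsum_congr fun t => (hcol t).symm
      _ = ∑' j, ∑' t, F j t := hswap
      _ = ∑' n : ℕ, (n : ℝ) * f n := tsum_congr hrow



lemma vecPow_succ (x : ℕ → ℝ) (H : ℕ → ℕ → ℝ) (k : ℕ) :
    vecPow x H (k + 1) = vecMat (vecPow x H k) H := rfl

lemma vecPow_zero (x : ℕ → ℝ) (H : ℕ → ℕ → ℝ) : vecPow x H 0 = x := rfl

/-- if `μ := m ∑_{n≥1} g H^n 1^t < ∞`, then
`β̂ := m̂ ∑_{n≥1} n ρ^n ĝ Ĥ^n 1^t = (μ-1)/(ρ-1)`. -/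
theorem dual_beta_formula
    (H : ℕ → ℕ → ℝ) (g q : ℕ → ℝ) (m ρ μ : ℝ)
    (hH : ∀ i j, 0 ≤ H i j) (hHsum : ∀ i, Summable (H i)) (hHrow : ∀ i, ∑' j, H i j ≤ 1)
    (hg : ∀ j, 0 ≤ g j) (hgsum : Summable g) (hg1 : ∑' j, g j = 1)
    (hm : 0 < m) (hρ1 : 1 < ρ) (hρm : ρ < 1 + m)
    (hq0 : ∀ i, 0 < q i) (hq1 : ∀ i, q i < 1)
    (hHq : ∀ i, ∑' j, H i j * q j = ρ * ((∑' j, H i j) - 1 + q i))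
    (hgq : ∑' j, g j * q j = (1 + m - ρ) / m)
    (hμfin : Summable fun n : ℕ => ∑' j, vecPow g H (n + 1) j)
    (hμ : μ = m * ∑' n : ℕ, ∑' j, vecPow g H (n + 1) j) :
    (1 + m - ρ) / ρ
        * ∑' n : ℕ, ((n : ℝ) + 1) * ρ ^ (n + 1)
            * ∑' j, vecPow (fun l => m * g l * q l / (1 + m - ρ))
                (fun i' j' => H i' j' * q j' / (q i' * ρ)) (n + 1) j
      = (μ - 1) / (ρ - 1) := by
  have hρ0 : (0:ℝ) < ρ := lt_trans one_pos hρ1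
  have hρne : ρ ≠ 0 := ne_of_gt hρ0
  have hinv0 : (0:ℝ) ≤ ρ⁻¹ := inv_nonneg.2 hρ0.le
  have hinv1 : ρ⁻¹ < 1 := by
    rw [inv_lt_one_iff₀]; right; exact hρ1
  have hmρ : (0:ℝ) < 1 + m - ρ := by linarith
  set x : ℕ → ℕ → ℝ := vecPow g H with hxdef
  have hxsucc : ∀ n j, x (n + 1) j = ∑' i, x n i * H i j := fun n j => rfl
  set a : ℕ → ℝ := fun n => ∑' j, x n j with hadef
  set b : ℕ → ℝ := fun n => ∑' j, x n j * q j with hbdef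
  -- nonnegativity of iterates
  have hx0 : ∀ n j, 0 ≤ x n j := by
    intro n
    induction n with
    | zero => exact hg
    | succ n ih =>
      intro j; rw [hxsucc]
      exact tsum_nonneg fun i => mul_nonneg (ih i) (hH i j)
  have hHone : ∀ i j, H i j ≤ 1 := fun i j =>
    le_trans (Summable.le_tsum (hHsum i) j fun k _ => hH i k) (hHrow i)
  -- summability of iterates
  have hxs : ∀ n, Summable (x n) := by
    intro n
    induction n with
    | zero => exact hgsum
    | succ n ih =>
      have := (my_fubini (hx0 n) ih hH hHsum hHrow).1
      exact this.congr fun j => (hxsucc n j).symm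
  have haa : ∀ n, a (n + 1) = ∑' i, x n i * (∑' j, H i j) := by
    intro n
    have := (my_fubini (hx0 n) (hxs n) hH hHsum hHrow).2.2
    calc a (n + 1) = ∑' j, ∑' i, x n i * H i j := tsum_congr fun j => hxsucc n j
      _ = ∑' i, x n i * (∑' j, H i j) := this
  have hxr : ∀ n, Summable (fun i => x n i * (∑' j, H i j)) :=
    fun n => (my_fubini (hx0 n) (hxs n) hH hHsum hHrow).2.1
  have hamono : ∀ n, a (n + 1) ≤ a n := by
    intro n
    rw [haa n]
    refine Summable.tsum_le_tsum (fun i => ?_) (hxr n) (hxs n)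
    exact mul_le_of_le_one_right (hx0 n i) (hHrow i)
  have ha0 : a 0 = 1 := hg1
  have hanonneg : ∀ n, 0 ≤ a n := fun n => tsum_nonneg fun j => hx0 n j
  have hale1 : ∀ n, a n ≤ 1 := by
    intro n
    induction n with
    | zero => exact le_of_eq ha0
    | succ n ih => exact le_trans (hamono n) ih
  have hasum : Summable a := by
    refine (summable_nat_add_iff 1).1 ?_
    exact hμfin
  have hashift : Summable (fun n => a (n + 1)) := hμfin
  have haton0 : Tendsto a atTop (𝓝 0) := hasum.tendsto_atTop_zero
  -- the decrement sequence
  set d : ℕ → ℝ := fun n => a n - a (n + 1) with hddef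
  have hd0 : ∀ n, 0 ≤ d n := fun n => sub_nonneg.2 (hamono n)
  have hdsum : Summable d := hasum.sub hashift
  have htail : ∀ t, ∑' k, d (k + t) = a t := by
    intro t
    have hsumt : Summable fun k => d (k + t) := (summable_nat_add_iff t).2 hdsum
    have h1 : Tendsto (fun N => ∑ k ∈ Finset.range N, d (k + t)) atTop
        (𝓝 (∑' k, d (k + t))) := hsumt.hasSum.tendsto_sum_nat
    have h2 : ∀ N, ∑ k ∈ Finset.range N, d (k + t) = a t - a (N + t) := by
      intro N
      have h := Finset.sum_range_sub' (f := fun k => a (k + t)) N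
      calc ∑ k ∈ Finset.range N, d (k + t)
          = ∑ k ∈ Finset.range N, (a (k + t) - a ((k + 1) + t)) := by
            refine Finset.sum_congr rfl fun k _ => ?_
            simp only [hddef]
            rw [show k + 1 + t = k + t + 1 from by omega]
        _ = a (0 + t) - a (N + t) := h
        _ = a t - a (N + t) := by rw [zero_add]
    have h3 : Tendsto (fun N => a t - a (N + t)) atTop (𝓝 (a t - 0)) := by
      refine tendsto_const_nhds.sub ?_
      exact haton0.comp (tendsto_add_atTop_nat t)
    have h4 := tendsto_nhds_unique h1 (by simpa only [h2] using h3)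
    rw [h4, sub_zero]
  -- b basics
  have hbs : ∀ n, Summable (fun j => x n j * q j) := by
    intro n
    refine Summable.of_nonneg_of_le (fun j => mul_nonneg (hx0 n j) (hq0 j).le)
      (fun j => mul_le_of_le_one_right (hx0 n j) (hq1 j).le) (hxs n)
  have hbnonneg : ∀ n, 0 ≤ b n := fun n => tsum_nonneg fun j => mul_nonneg (hx0 n j) (hq0 j).le
  have hble : ∀ n, b n ≤ a n := fun n =>
    Summable.tsum_le_tsum (fun j => mul_le_of_le_one_right (hx0 n j) (hq1 j).le) (hbs n) (hxs n)
  have hbsum : Summable b :=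
    Summable.of_nonneg_of_le hbnonneg hble hasum
  have hb0 : b 0 = (1 + m - ρ) / m := hgq
  -- the recurrence
  have hrec : ∀ n, b (n + 1) = ρ * (a (n + 1) - a n + b n) := by
    intro n
    have hK0 : ∀ i j, 0 ≤ H i j * q j := fun i j => mul_nonneg (hH i j) (hq0 j).le
    have hKs : ∀ i, Summable (fun j => H i j * q j) := fun i =>
      Summable.of_nonneg_of_le (hK0 i)
        (fun j => mul_le_of_le_one_right (hH i j) (hq1 j).le) (hHsum i)
    have hKrow : ∀ i, ∑' j, H i j * q j ≤ 1 := by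
      intro i
      calc ∑' j, H i j * q j ≤ ∑' j, H i j :=
            Summable.tsum_le_tsum (fun j => mul_le_of_le_one_right (hH i j) (hq1 j).le)
              (hKs i) (hHsum i)
        _ ≤ 1 := hHrow i
    have hfub := (my_fubini (hx0 n) (hxs n) hK0 hKs hKrow).2.2
    have hb1 : b (n + 1) = ∑' j, ∑' i, x n i * (H i j * q j) := by
      refine tsum_congr fun j => ?_
      rw [hxsucc n j, ← tsum_mul_right]
      exact tsum_congr fun i => mul_assoc _ _ _
    have hb2 : b (n + 1) = ∑' i, x n i * (ρ * ((∑' j, H i j) - 1 + q i)) := by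
      rw [hb1, hfub]
      exact tsum_congr fun i => by rw [hHq i]
    have hpt : ∀ i, x n i * (ρ * ((∑' j, H i j) - 1 + q i))
        = ρ * (x n i * (∑' j, H i j) - x n i + x n i * q i) := fun i => by ring
    have hsplit : ∑' i, (x n i * (∑' j, H i j) - x n i + x n i * q i)
        = (∑' i, x n i * (∑' j, H i j)) - (∑' i, x n i) + ∑' i, x n i * q i := by
      rw [Summable.tsum_add ((hxr n).sub (hxs n)) (hbs n), Summable.tsum_sub (hxr n) (hxs n)]
    rw [hb2, tsum_congr hpt, tsum_mul_left, hsplit, ← haa n]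
  -- tail representation of b
  have hpow1 : ∀ k : ℕ, ρ⁻¹ ^ k ≤ 1 := fun k => pow_le_one₀ hinv0 hinv1.le
  have hbtail : ∀ n, b n = ∑' k, ρ⁻¹ ^ k * d (k + n) := by
    set u : ℕ → ℝ := fun n => b n * ρ⁻¹ ^ n with hudef
    set f : ℕ → ℝ := fun k => ρ⁻¹ ^ k * d k with hfdef
    have hf0 : ∀ k, 0 ≤ f k := fun k => mul_nonneg (pow_nonneg hinv0 k) (hd0 k)
    have hfsum : Summable f :=
      Summable.of_nonneg_of_le hf0
        (fun k => mul_le_of_le_one_left (hd0 k) (hpow1 k)) hdsum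
    have hcanc : ∀ n : ℕ, ρ * ρ⁻¹ ^ (n + 1) = ρ⁻¹ ^ n := by
      intro n
      rw [pow_succ' (a := ρ⁻¹), ← mul_assoc, mul_inv_cancel₀ hρne, one_mul]
    have hustep : ∀ n, u (n + 1) = u n - f n := by
      intro n
      show b (n + 1) * ρ⁻¹ ^ (n + 1) = b n * ρ⁻¹ ^ n - ρ⁻¹ ^ n * d n
      calc b (n + 1) * ρ⁻¹ ^ (n + 1)
          = (a (n + 1) - a n + b n) * (ρ * ρ⁻¹ ^ (n + 1)) := by rw [hrec n]; ring
        _ = (a (n + 1) - a n + b n) * ρ⁻¹ ^ n := by rw [hcanc n]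
        _ = b n * ρ⁻¹ ^ n - ρ⁻¹ ^ n * (a n - a (n + 1)) := by ring
        _ = b n * ρ⁻¹ ^ n - ρ⁻¹ ^ n * d n := rfl
    have hu0' : ∀ n, 0 ≤ u n := fun n => mul_nonneg (hbnonneg n) (pow_nonneg hinv0 n)
    have hule : ∀ n, u n ≤ ρ⁻¹ ^ n := fun n =>
      mul_le_of_le_one_left (pow_nonneg hinv0 n) ((hble n).trans (hale1 n))
    have huton0 : Tendsto u atTop (𝓝 0) :=
      squeeze_zero hu0' hule (tendsto_pow_atTop_nhds_zero_of_lt_one hinv0 hinv1)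
    have hupart : ∀ n, u n = u 0 - ∑ k ∈ Finset.range n, f k := by
      intro n
      induction n with
      | zero => simp
      | succ n ih => rw [Finset.sum_range_succ, hustep n, ih]; ring
    have hu0 : u 0 = ∑' k, f k := by
      have h1 : Tendsto (fun n => ∑ k ∈ Finset.range n, f k) atTop (𝓝 (∑' k, f k)) :=
        hfsum.hasSum.tendsto_sum_nat
      have h2 : Tendsto (fun n => ∑ k ∈ Finset.range n, f k) atTop (𝓝 (u 0 - 0)) := by
        have he : (fun n => ∑ k ∈ Finset.range n, f k) = fun n => u 0 - u n := by
          funext n; rw [hupart n]; ring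
        rw [he]
        exact tendsto_const_nhds.sub huton0
      have := tendsto_nhds_unique h1 h2
      rw [this, sub_zero]
    have hutail : ∀ n, u n = ∑' k, f (k + n) := by
      intro n
      have h := Summable.sum_add_tsum_nat_add (f := f) n hfsum
      rw [hupart n, hu0]
      linarith
    intro n
    have h1 : b n = u n * ρ ^ n := by
      show b n = b n * ρ⁻¹ ^ n * ρ ^ n
      rw [mul_assoc, ← mul_pow, inv_mul_cancel₀ hρne, one_pow, mul_one]
    have hcanc2 : ρ⁻¹ ^ n * ρ ^ n = 1 := by
      rw [← mul_pow, inv_mul_cancel₀ hρne, one_pow]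
    rw [h1, hutail n, ← tsum_mul_right]
    refine tsum_congr fun k => ?_
    show ρ⁻¹ ^ (k + n) * d (k + n) * ρ ^ n = ρ⁻¹ ^ k * d (k + n)
    rw [pow_add]
    calc ρ⁻¹ ^ k * ρ⁻¹ ^ n * d (k + n) * ρ ^ n
        = ρ⁻¹ ^ k * d (k + n) * (ρ⁻¹ ^ n * ρ ^ n) := by ring
      _ = ρ⁻¹ ^ k * d (k + n) := by rw [hcanc2, mul_one]
  -- Abel: summability of n * d n and its value
  have hnd : Summable (fun i : ℕ => (i : ℝ) * d i) := by
    have hQ : ∀ N : ℕ, ∑ i ∈ Finset.range N, (i : ℝ) * d i + (N : ℝ) * a N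
        ≤ ∑ i ∈ Finset.range N, a i := by
      intro N
      induction N with
      | zero => simp
      | succ N ih =>
        rw [Finset.sum_range_succ, Finset.sum_range_succ]
        have hda : a (N + 1) ≤ a N := hamono N
        have e1 : (N : ℝ) * d N = (N : ℝ) * a N - (N : ℝ) * a (N + 1) := by
          simp only [hddef]; ring
        have e2 : ((N + 1 : ℕ) : ℝ) * a (N + 1) = (N : ℝ) * a (N + 1) + a (N + 1) := by
          push_cast; ring
        rw [e2, e1]
        linarith
    refine summable_of_sum_range_le (c := ∑' n, a n)
      (fun n => mul_nonneg (Nat.cast_nonneg n) (hd0 n)) fun N => ?_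
    have h1 : (0:ℝ) ≤ (N : ℝ) * a N :=
      mul_nonneg (Nat.cast_nonneg N) (hanonneg N)
    have h2 : ∑ i ∈ Finset.range N, a i ≤ ∑' n, a n :=
      Summable.sum_le_tsum (Finset.range N) (fun i _ => hanonneg i) hasum
    linarith [hQ N]
  have hswapd := my_swap hd0 hdsum hnd
  have hμ' : ∑' t : ℕ, a (t + 1) = μ / m := by
    rw [hμ, mul_comm, mul_div_assoc, div_self hm.ne', mul_one]
  have htails : ∀ t : ℕ, ∑' k, d (k + t + 1) = a (t + 1) := by
    intro t
    rw [← htail (t + 1)]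
    exact tsum_congr fun k => by rw [add_assoc]
  have hM : ∑' i : ℕ, (i : ℝ) * d i = μ / m := by
    rw [← hswapd.2, tsum_congr htails, hμ']
  -- summability of n * b n
  have hnb : Summable (fun n : ℕ => (n : ℝ) * b n) := by
    have hM0 : (0:ℝ) ≤ ∑' i : ℕ, (i : ℝ) * d i :=
      tsum_nonneg fun i => mul_nonneg (Nat.cast_nonneg i) (hd0 i)
    have hgeo : Summable (fun k : ℕ => ρ⁻¹ ^ k * (∑' i : ℕ, (i : ℝ) * d i)) :=
      (summable_geometric_of_lt_one hinv0 hinv1).mul_right _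
    have hsumk : ∀ j : ℕ, Summable (fun k => ρ⁻¹ ^ k * d (k + j)) := by
      intro j
      exact Summable.of_nonneg_of_le
        (fun k => mul_nonneg (pow_nonneg hinv0 k) (hd0 _))
        (fun k => mul_le_of_le_one_left (hd0 _) (hpow1 k))
        ((summable_nat_add_iff j).2 hdsum)
    refine summable_of_sum_range_le (c := ∑' k : ℕ, ρ⁻¹ ^ k * (∑' i : ℕ, (i : ℝ) * d i))
      (fun n => mul_nonneg (Nat.cast_nonneg n) (hbnonneg n)) fun N => ?_
    have h1 : ∀ j : ℕ, (j : ℝ) * b j = ∑' k, (j : ℝ) * (ρ⁻¹ ^ k * d (k + j)) := by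
      intro j; rw [hbtail j, ← tsum_mul_left]
    have h2 : ∑ j ∈ Finset.range N, (j : ℝ) * b j
        = ∑' k, ∑ j ∈ Finset.range N, (j : ℝ) * (ρ⁻¹ ^ k * d (k + j)) := by
      rw [Finset.sum_congr rfl fun j _ => h1 j]
      exact (Summable.tsum_finsetSum fun j _ => (hsumk j).mul_left _).symm
    rw [h2]
    refine Summable.tsum_le_tsum (fun k => ?_) ?_ hgeo
    · have hsh : Summable (fun j : ℕ => ((j + k : ℕ) : ℝ) * d (j + k)) :=
        (summable_nat_add_iff (f := fun i : ℕ => (i : ℝ) * d i) k).2 hnd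
      have hb1 : ∑ j ∈ Finset.range N, (j : ℝ) * (ρ⁻¹ ^ k * d (k + j))
          ≤ ρ⁻¹ ^ k * ∑ j ∈ Finset.range N, ((j + k : ℕ) : ℝ) * d (j + k) := by
        rw [Finset.mul_sum]
        refine Finset.sum_le_sum fun j _ => ?_
        have e : (j : ℝ) * (ρ⁻¹ ^ k * d (k + j)) = ρ⁻¹ ^ k * ((j : ℝ) * d (j + k)) := by
          rw [add_comm k j]; ring
        rw [e]
        refine mul_le_mul_of_nonneg_left ?_ (pow_nonneg hinv0 k)
        refine mul_le_mul_of_nonneg_right ?_ (hd0 _)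
        push_cast
        linarith [Nat.cast_nonneg (α := ℝ) k]
      have hb2 : ∑ j ∈ Finset.range N, ((j + k : ℕ) : ℝ) * d (j + k)
          ≤ ∑' i : ℕ, (i : ℝ) * d i := by
        calc ∑ j ∈ Finset.range N, ((j + k : ℕ) : ℝ) * d (j + k)
            ≤ ∑' j : ℕ, ((j + k : ℕ) : ℝ) * d (j + k) :=
              Summable.sum_le_tsum (Finset.range N)
                (fun i _ => mul_nonneg (Nat.cast_nonneg _) (hd0 _)) hsh
          _ ≤ ∑' i : ℕ, (i : ℝ) * d i :=
              my_tail_le (fun i => mul_nonneg (Nat.cast_nonneg _) (hd0 _)) hnd k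
      calc ∑ j ∈ Finset.range N, (j : ℝ) * (ρ⁻¹ ^ k * d (k + j))
          ≤ ρ⁻¹ ^ k * ∑ j ∈ Finset.range N, ((j + k : ℕ) : ℝ) * d (j + k) := hb1
        _ ≤ ρ⁻¹ ^ k * (∑' i : ℕ, (i : ℝ) * d i) :=
            mul_le_mul_of_nonneg_left hb2 (pow_nonneg hinv0 k)
    · exact summable_sum fun j _ => (hsumk j).mul_left _
  -- value of ∑ b
  have hρsub : ρ - 1 ≠ 0 := sub_ne_zero.2 (ne_of_gt hρ1)
  have hd1 : ∑' n, (a (n + 1) - a n) = -1 := by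
    have h0 : ∑' k, d k = a 0 := by simpa using htail 0
    have hpt : ∀ n, a (n + 1) - a n = -(d n) := fun n => by
      simp only [hddef]; ring
    rw [tsum_congr hpt, tsum_neg, h0, ha0]
  have hB : ∑' n, b n = (m + 1) / m := by
    have hshift1 : ∑' n, b (n + 1) = (∑' n, b n) - b 0 := by
      have h := Summable.tsum_eq_zero_add hbsum
      linarith
    have hsplit : ∑' n, (a (n + 1) - a n + b n)
        = (∑' n, (a (n + 1) - a n)) + ∑' n, b n :=
      Summable.tsum_add (hashift.sub hasum) hbsum
    have heq : (∑' n, b n) - b 0 = ρ * (-1 + ∑' n, b n) := by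
      rw [← hshift1, tsum_congr (fun n => hrec n), tsum_mul_left, hsplit, hd1]
    rw [hb0] at heq
    rw [eq_div_iff hm.ne']
    have hz : ((∑' n, b n) * m - (m + 1)) * (ρ - 1) = 0 := by
      have hm' : m ≠ 0 := hm.ne'
      field_simp at heq
      linear_combination -heq
    rcases mul_eq_zero.1 hz with h | h
    · linarith
    · exact absurd h hρsub
  -- value of ∑ n b n
  have hS1 : ∑' n : ℕ, ((n : ℝ) + 1) * b (n + 1) = ∑' n : ℕ, (n : ℝ) * b n := by
    have h := Summable.tsum_eq_zero_add hnb
    rw [h]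
    push_cast
    simp
  have hSb : ∑' n : ℕ, (n : ℝ) * b n = ρ * (μ - 1) / (m * (ρ - 1)) := by
    have hexp : ∀ n : ℕ, ((n : ℝ) + 1) * b (n + 1)
        = ρ * (((n : ℝ) + 1) * b n - ((n : ℝ) + 1) * d n) := by
      intro n; rw [hrec n]; simp only [hddef]; ring
    have hsplus : Summable (fun n : ℕ => ((n : ℝ) + 1) * b n) := by
      have he : (fun n : ℕ => ((n : ℝ) + 1) * b n) = fun n : ℕ => (n : ℝ) * b n + b n := by
        funext n; ring
      rw [he]; exact hnb.add hbsum
    have hdplus : Summable (fun n : ℕ => ((n : ℝ) + 1) * d n) := by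
      have he : (fun n : ℕ => ((n : ℝ) + 1) * d n) = fun n : ℕ => (n : ℝ) * d n + d n := by
        funext n; ring
      rw [he]; exact hnd.add hdsum
    have hvalb : ∑' n : ℕ, ((n : ℝ) + 1) * b n
        = (∑' n : ℕ, (n : ℝ) * b n) + ∑' n, b n := by
      have he : ∀ n : ℕ, ((n : ℝ) + 1) * b n = (n : ℝ) * b n + b n := fun n => by ring
      rw [tsum_congr he, Summable.tsum_add hnb hbsum]
    have hd2 : ∑' n, d n = 1 := by
      have h0 : ∑' k, d k = a 0 := by simpa using htail 0
      rw [h0, ha0]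
    have hvald : ∑' n : ℕ, ((n : ℝ) + 1) * d n = μ / m + 1 := by
      have he : ∀ n : ℕ, ((n : ℝ) + 1) * d n = (n : ℝ) * d n + d n := fun n => by ring
      rw [tsum_congr he, Summable.tsum_add hnd hdsum, hM, hd2]
    have heqS : (∑' n : ℕ, (n : ℝ) * b n)
        = ρ * (((∑' n : ℕ, (n : ℝ) * b n) + (m + 1) / m) - (μ / m + 1)) := by
      calc ∑' n : ℕ, (n : ℝ) * b n
          = ∑' n : ℕ, ((n : ℝ) + 1) * b (n + 1) := hS1.symm
        _ = ρ * (∑' n : ℕ, (((n : ℝ) + 1) * b n - ((n : ℝ) + 1) * d n)) := by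
            rw [tsum_congr hexp, tsum_mul_left]
        _ = ρ * ((∑' n : ℕ, ((n : ℝ) + 1) * b n) - ∑' n : ℕ, ((n : ℝ) + 1) * d n) := by
            rw [Summable.tsum_sub hsplus hdplus]
        _ = ρ * (((∑' n : ℕ, (n : ℝ) * b n) + (m + 1) / m) - (μ / m + 1)) := by
            rw [hvalb, hvald, hB]
    rw [eq_div_iff (mul_ne_zero hm.ne' hρsub)]
    have hm' : m ≠ 0 := hm.ne'
    field_simp at heqS
    linear_combination -heqS
  -- hat identity
  have hmρne : (1 + m - ρ) ≠ 0 := hmρ.ne'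
  have hhat : ∀ k j, vecPow (fun l => m * g l * q l / (1 + m - ρ))
      (fun i' j' => H i' j' * q j' / (q i' * ρ)) k j
      = x k j * q j * (m / ((1 + m - ρ) * ρ ^ k)) := by
    intro k
    induction k with
    | zero =>
      intro j
      show m * g j * q j / (1 + m - ρ) = x 0 j * q j * (m / ((1 + m - ρ) * ρ ^ 0))
      have hx00 : x 0 j = g j := rfl
      rw [hx00, pow_zero, mul_one]
      field_simp
    | succ k ih =>
      intro j
      rw [vecPow_succ]
      show (∑' i, vecPow (fun l => m * g l * q l / (1 + m - ρ))
          (fun i' j' => H i' j' * q j' / (q i' * ρ)) k i * (H i j * q j / (q i * ρ)))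
        = x (k + 1) j * q j * (m / ((1 + m - ρ) * ρ ^ (k + 1)))
      have hpt : ∀ i, vecPow (fun l => m * g l * q l / (1 + m - ρ))
          (fun i' j' => H i' j' * q j' / (q i' * ρ)) k i * (H i j * q j / (q i * ρ))
          = (x k i * H i j) * (q j * (m / ((1 + m - ρ) * ρ ^ (k + 1)))) := by
        intro i
        rw [ih i]
        have hqi : q i ≠ 0 := (hq0 i).ne'
        have hρp : (ρ : ℝ) ^ k ≠ 0 := pow_ne_zero _ hρne
        field_simp
        ring
      rw [tsum_congr hpt, tsum_mul_right, ← hxsucc k j]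
      ring
  -- final assembly
  have hinner : ∀ n : ℕ,
      (∑' j, vecPow (fun l => m * g l * q l / (1 + m - ρ))
        (fun i' j' => H i' j' * q j' / (q i' * ρ)) (n + 1) j)
      = b (n + 1) * (m / ((1 + m - ρ) * ρ ^ (n + 1))) := by
    intro n
    rw [tsum_congr fun j => hhat (n + 1) j]
    exact tsum_mul_right
  have hterm : ∀ n : ℕ,
      ((n : ℝ) + 1) * ρ ^ (n + 1) * (b (n + 1) * (m / ((1 + m - ρ) * ρ ^ (n + 1))))
      = (((n : ℝ) + 1) * b (n + 1)) * (m / (1 + m - ρ)) := by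
    intro n
    have hρp : (ρ : ℝ) ^ (n + 1) ≠ 0 := pow_ne_zero _ hρne
    field_simp
  rw [tsum_congr fun n => by rw [hinner n, hterm n]]
  rw [tsum_mul_right, hS1, hSb]
  field_simp
end

section
/- Define the Harris–Sevastyanov transform f̃(s) := (f(s(1−q)+q) − q)/(1−q) for s ∈ [0,1]. Then f̃(s) = ∑_{k≥0} p̃_k s^k where p̃_0 = 0 and p̃_k := ∑_{i≥k} p_i (i choose k) q^{i−k} (1−q)^{k−1} for k ≥ 1; the coefficients satisfy p̃_k ≥ 0 and ∑_{k≥1} p̃_k = 1; if M := f'(1) = ∑_k k p_k < ∞ then f̃'(1) = M; and for every n ≥ 0 the n-th functional iterate satisfies f̃^{(n)}(s) = (f^{(n)}(s(1−q)+q) − q)/(1−q) for all s ∈ [0,1]. -/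
/-!
The transform is `f` conjugated by the affine map `φ s = s (1 - q) + q`, which fixes `1` and
sends `0` to the fixed point `q`. Expanding `f (q + s (1 - q))` in its Taylor series about `q`
(a rearrangement of a double series with nonnegative terms) produces the coefficients `p̃ₖ`, the
constant term `f q = q` cancelling. Nonnegativity is inherited from `p`, evaluating at `s = 1`
gives `∑ p̃ₖ = f 1 = 1`, the chain rule gives `f̃'(1) = f'(1)`, and conjugation commutes with
iteration.
-/

open Filter Topology Finset

section PowerSeries

variable {p : ℕ → ℝ}

theorem summable_mul_pow_of_nonneg (hp : ∀ k, 0 ≤ p k) (hpsum : Summable p) {x : ℝ}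
    (hx₀ : 0 ≤ x) (hx₁ : x ≤ 1) : Summable fun k => p k * x ^ k :=
  hpsum.of_nonneg_of_le (fun k => mul_nonneg (hp k) (pow_nonneg hx₀ k))
    fun k => mul_le_of_le_one_right (hp k) (pow_le_one₀ hx₀ hx₁)

/-- `taylorCoeff p b k` is `F⁽ᵏ⁾(b) / k!` for `F x = ∑ pᵢ xⁱ`. -/
noncomputable def taylorCoeff (p : ℕ → ℝ) (b : ℝ) (k : ℕ) : ℝ :=
  ∑' j, p (j + k) * ((j + k).choose k : ℝ) * b ^ j

theorem taylorCoeff_zero (b : ℝ) : taylorCoeff p b 0 = ∑' j, p j * b ^ j := by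
  simp [taylorCoeff]

theorem taylorCoeff_nonneg (hp : ∀ k, 0 ≤ p k) {b : ℝ} (hb : 0 ≤ b) (k : ℕ) :
    0 ≤ taylorCoeff p b k :=
  tsum_nonneg fun j => by have := hp (j + k); positivity

theorem hasSum_taylorCoeff_mul_pow (hp : ∀ k, 0 ≤ p k) {a b : ℝ} (ha : 0 ≤ a) (hb : 0 ≤ b)
    (hsum : Summable fun i => p i * (a + b) ^ i) :
    HasSum (fun k => taylorCoeff p b k * a ^ k) (∑' i, p i * (a + b) ^ i) := by
  -- `U (k, j)` is the `aᵏ bʲ` term of `p (j + k) (a + b) ^ (j + k)`; its antidiagonals are the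
  -- binomial expansions, its rows the Taylor coefficients.
  set U : ℕ × ℕ → ℝ := fun x => p (x.2 + x.1) * ((x.2 + x.1).choose x.1 : ℝ) * b ^ x.2 * a ^ x.1
  have hU : ∀ x, 0 ≤ U x := fun x => by have := hp (x.2 + x.1); positivity
  have hdiag : ∀ n, ∑ x ∈ antidiagonal n, U x = p n * (a + b) ^ n := by
    intro n
    rw [(Commute.all a b).add_pow', mul_sum]
    refine sum_congr rfl fun x hx => ?_
    rw [HasAntidiagonal.mem_antidiagonal, add_comm] at hx
    simp only [U, hx, nsmul_eq_mul]
    ring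
  let e := Finset.HasAntidiagonal.sigmaAntidiagonalEquivProd (A := ℕ)
  have hfiber : ∀ n, HasSum (fun x : antidiagonal n => U x) (p n * (a + b) ^ n) := fun n =>
    hdiag n ▸ (antidiagonal n).hasSum U
  have hUe : Summable (U ∘ e) :=
    (summable_sigma_of_nonneg fun x => hU _).2
      ⟨fun n => (hfiber n).summable, hsum.congr fun n => ((hfiber n).tsum_eq).symm⟩
  have hUsum : HasSum U (∑' i, p i * (a + b) ^ i) := by
    rw [← e.hasSum_iff, ← (hUe.hasSum.sigma hfiber).unique hsum.hasSum]
    exact hUe.hasSum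
  refine hUsum.prod_fiberwise fun k => ?_
  convert ((summable_prod_of_nonneg (fun x => hU x)).1 hUsum.summable).1 k |>.hasSum using 1
  rw [taylorCoeff, ← tsum_mul_right]

theorem slope_tsum_mul_pow_one (hp : ∀ k, 0 ≤ p k) (hpsum : Summable p) {x : ℝ}
    (hx₀ : 0 ≤ x) (hx₁ : x ≤ 1) (hx : x ≠ 1) :
    slope (fun y => ∑' k, p k * y ^ k) 1 x = ∑' k, p k * ∑ j ∈ range k, x ^ j := by
  have hdiff : ∑' k, p k * x ^ k - ∑' k, p k * 1 ^ k
      = (∑' k, p k * ∑ j ∈ range k, x ^ j) * (x - 1) := by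
    simp only [one_pow, mul_one]
    rw [← (summable_mul_pow_of_nonneg hp hpsum hx₀ hx₁).tsum_sub hpsum, ← tsum_mul_right]
    exact tsum_congr fun k => by rw [mul_assoc, geom_sum_mul]; ring
  rw [slope_def_field, hdiff, mul_div_cancel_right₀ _ (sub_ne_zero.2 hx)]

theorem hasDerivWithinAt_tsum_mul_pow_one (hp : ∀ k, 0 ≤ p k) (hpsum : Summable p)
    (hM : Summable fun k : ℕ => (k : ℝ) * p k) :
    HasDerivWithinAt (fun x => ∑' k, p k * x ^ k) (∑' k : ℕ, (k : ℝ) * p k) (Set.Icc 0 1) 1 := by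
  rw [hasDerivWithinAt_iff_tendsto_slope]
  have hslope : slope (fun y => ∑' k, p k * y ^ k) 1 =ᶠ[𝓝[Set.Icc 0 1 \ {1}] 1]
      fun x => ∑' k, p k * ∑ j ∈ range k, x ^ j := by
    filter_upwards [self_mem_nhdsWithin] with x ⟨⟨hx₀, hx₁⟩, hx⟩
    exact slope_tsum_mul_pow_one hp hpsum hx₀ hx₁ hx
  rw [tendsto_congr' hslope]
  refine tendsto_tsum_of_dominated_convergence hM (fun k => ?_) ?_
  · have hcont : Continuous fun x : ℝ => p k * ∑ j ∈ range k, x ^ j := by fun_prop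
    simpa [mul_comm] using (hcont.tendsto 1).mono_left nhdsWithin_le_nhds
  · filter_upwards [self_mem_nhdsWithin] with x ⟨⟨hx₀, hx₁⟩, _⟩ k
    have hgeom : ∑ j ∈ range k, x ^ j ≤ k := by
      simpa using sum_le_sum fun j (_ : j ∈ range k) => pow_le_one₀ hx₀ hx₁
    rw [Real.norm_of_nonneg (mul_nonneg (hp k) (sum_nonneg fun j _ => pow_nonneg hx₀ j)),
      mul_comm (k : ℝ)]
    exact mul_le_mul_of_nonneg_left hgeom (hp k)

end PowerSeries

theorem iterate_affine_conj {K : Type*} [Field K] (f : K → K) {c : K} (hc : c ≠ 0) (q : K)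
    (n : ℕ) (s : K) :
    (fun x => (f (x * c + q) - q) / c)^[n] s = (f^[n] (s * c + q) - q) / c := by
  have hconj : Function.Semiconj (fun x => x * c + q) (fun x => (f (x * c + q) - q) / c) f :=
    fun x => by field_simp; ring
  rw [← hconj.iterate_right n s, add_sub_cancel_right, mul_div_cancel_right₀ _ hc]

theorem HasDerivWithinAt.affine_conj_one {F : ℝ → ℝ} {F' q : ℝ}
    (hF : HasDerivWithinAt F F' (Set.Icc 0 1) 1) (hq₀ : 0 ≤ q) (hq₁ : q < 1) :
    HasDerivWithinAt (fun s => (F (s * (1 - q) + q) - q) / (1 - q)) F' (Set.Icc 0 1) 1 := by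
  have hc : 1 - q ≠ 0 := by linarith
  have hφ : HasDerivWithinAt (fun s : ℝ => s * (1 - q) + q) (1 - q) (Set.Icc 0 1) 1 :=
    ((hasDerivWithinAt_id _ _).mul_const _).add_const _ |>.congr_deriv (one_mul _)
  have hmaps : Set.MapsTo (fun s : ℝ => s * (1 - q) + q) (Set.Icc 0 1) (Set.Icc 0 1) :=
    fun s ⟨hs₀, hs₁⟩ => ⟨by nlinarith, by nlinarith⟩
  have hF' : HasDerivWithinAt F F' (Set.Icc 0 1) (1 * (1 - q) + q) := by
    rwa [one_mul, sub_add_cancel]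
  simpa [hc] using ((hF'.comp 1 hφ hmaps).sub_const q).div_const (1 - q)

theorem hasSum_harrisSevastyanov {p : ℕ → ℝ} (hp : ∀ k, 0 ≤ p k) (hpsum : Summable p) {q : ℝ}
    (hq₀ : 0 ≤ q) (hq₁ : q < 1) (hfix : ∑' k, p k * q ^ k = q) {ptilde : ℕ → ℝ}
    (hpt₀ : ptilde 0 = 0) (hptk : ∀ k, ptilde (k + 1) = taylorCoeff p q (k + 1) * (1 - q) ^ k)
    {s : ℝ} (hs₀ : 0 ≤ s) (hs₁ : s ≤ 1) :
    HasSum (fun k => ptilde k * s ^ k) ((∑' k, p k * (s * (1 - q) + q) ^ k - q) / (1 - q)) := by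
  have hc : 0 < 1 - q := by linarith
  have htaylor := hasSum_taylorCoeff_mul_pow hp (a := s * (1 - q)) (by positivity) hq₀
    (summable_mul_pow_of_nonneg hp hpsum (by positivity) (by nlinarith))
  rw [← hasSum_nat_add_iff' 1] at htaylor
  simp only [range_one, sum_singleton, taylorCoeff_zero, hfix, pow_zero, mul_one] at htaylor
  rw [← hasSum_nat_add_iff' 1]
  simp only [range_one, sum_singleton, hpt₀, zero_mul, sub_zero]
  refine (htaylor.div_const (1 - q)).congr_fun fun k => ?_
  rw [hptk, mul_pow, pow_succ (1 - q)]
  field_simp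

/-- the Harris–Sevastyanov transform `f̃(s) = (f(s(1-q)+q) - q)/(1-q)` equals
`∑_k p̃_k s^k` where `p̃_0 = 0` and `p̃_k = ∑_{i≥k} p_i (i choose k) q^{i-k} (1-q)^{k-1}` for
`k ≥ 1`; the `p̃_k` are nonnegative and sum to one; if `M := ∑_k k p_k < ∞` then `f̃'(1) = M`;
and `f̃⁽ⁿ⁾(s) = (f⁽ⁿ⁾(s(1-q)+q) - q)/(1-q)` for all `n` and `s ∈ [0,1]`. -/
theorem harris_sevastyanov_single_type
    (p : ℕ → ℝ) (hp : ∀ k, 0 ≤ p k) (hpsum : Summable p) (hp1 : ∑' k, p k = 1)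
    (f : ℝ → ℝ) (hf : ∀ s, f s = ∑' k, p k * s ^ k)
    (q : ℝ) (hq0 : 0 < q) (hq1 : q < 1) (hfix : f q = q)
    (ptilde : ℕ → ℝ) (hpt0 : ptilde 0 = 0)
    (hptk : ∀ k : ℕ, ptilde (k + 1)
        = ∑' i : ℕ, p (i + (k + 1)) * ((i + (k + 1)).choose (k + 1) : ℝ)
            * q ^ i * (1 - q) ^ k) :
    (∀ s ∈ Set.Icc (0:ℝ) 1,
        (f (s * (1 - q) + q) - q) / (1 - q) = ∑' k, ptilde k * s ^ k)
    ∧ (∀ k, 0 ≤ ptilde k)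
    ∧ (∑' k, ptilde k = 1)
    ∧ (Summable (fun k : ℕ => (k : ℝ) * p k) →
        HasDerivWithinAt (fun s => (f (s * (1 - q) + q) - q) / (1 - q))
          (∑' k : ℕ, (k : ℝ) * p k) (Set.Icc (0:ℝ) 1) 1)
    ∧ ∀ n : ℕ, ∀ s ∈ Set.Icc (0:ℝ) 1,
        (fun x => (f (x * (1 - q) + q) - q) / (1 - q))^[n] s
          = (f^[n] (s * (1 - q) + q) - q) / (1 - q) := by
  obtain rfl : f = fun s => ∑' k, p k * s ^ k := funext hf
  have hc : 1 - q ≠ 0 := sub_ne_zero.2 hq1.ne'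
  have hptk' : ∀ k, ptilde (k + 1) = taylorCoeff p q (k + 1) * (1 - q) ^ k := fun k => by
    rw [hptk, taylorCoeff, ← tsum_mul_right]
  have hexpand : ∀ s ∈ Set.Icc (0 : ℝ) 1, HasSum (fun k => ptilde k * s ^ k)
      ((∑' k, p k * (s * (1 - q) + q) ^ k - q) / (1 - q)) := fun s ⟨hs₀, hs₁⟩ =>
    hasSum_harrisSevastyanov hp hpsum hq0.le hq1 hfix hpt0 hptk' hs₀ hs₁
  refine ⟨fun s hs => (hexpand s hs).tsum_eq.symm, ?_, ?_, fun hM => ?_,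
    fun n s _ => iterate_affine_conj (fun s => ∑' k, p k * s ^ k) hc q n s⟩
  · rintro (_ | k)
    · exact hpt0.ge
    · exact hptk' k ▸ mul_nonneg (taylorCoeff_nonneg hp hq0.le _) (pow_nonneg (by linarith) _)
  · have hone := (hexpand 1 (Set.right_mem_Icc.2 zero_le_one)).tsum_eq
    simp only [one_pow, mul_one, one_mul, sub_add_cancel, hp1] at hone
    rw [hone, div_self hc]
  · exact (hasDerivWithinAt_tsum_mul_pow_one hp hpsum hM).affine_conj_one hq0.le hq1
end

section
/- Assume M := h_1(1+m) > 1 and set q := (1+m−M)/m with 0 < q < 1, m̂ := h_0/h_1 and m̃ := M−1. Then for all s, t ∈ [0,1] the skeleton joint generating function F(s,t) := (f(s(1−q)+tq) − f(tq))/(1−q) factorizes as F(s,t) = s · 1/(1+m − m̃ s − (m−m̃) t) · 1/(1+m̂ − m̂ t) = s/(1+m−m(s(1−q)+tq)) · 1/(1+m̂−m̂t); consequently f̄(s) := F(s,s) = s/(1+m−ms) · 1/(1+m̂−m̂s) and the derivative of f̄ at s = 1 equals 1+m+m̂ = M + (M+1)m̂. -/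
/-!
For the Möbius map `x ↦ x / (1 + m - m x)` one has
`a/(1+m-ma) - b/(1+m-mb) = (1+m)(a-b) / ((1+m-ma)(1+m-mb))`.
Taking `a = s(1-q)+tq`, `b = tq` gives `a - b = s(1-q)`, which cancels the `1-q`, and the choice
`mq = h₀(1+m)` turns the second denominator into `(1+m)(1-h₀t)`, i.e. `(1+m)(1-h₀)` times
`1+m̂-m̂t`. On the diagonal both factors equal `1` at `s = 1`, so the derivative there is the sum
`(1+m) + m̂` of the derivatives of the two factors.
-/

open Filter Topology

noncomputable def linFrac (h0 m s : ℝ) : ℝ := h0 + (1 - h0) * s / (1 + m - m * s)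

lemma linFrac_sub_linFrac {h0 m a b : ℝ} (ha : 1 + m - m * a ≠ 0) (hb : 1 + m - m * b ≠ 0) :
    linFrac h0 m a - linFrac h0 m b
      = (1 - h0) * (1 + m) * (a - b) / ((1 + m - m * a) * (1 + m - m * b)) := by
  unfold linFrac
  rw [add_sub_add_left_eq_sub, mul_div_assoc, mul_div_assoc, ← mul_sub, div_sub_div _ _ ha hb]
  ring

lemma linFrac_skeleton_eq {h0 m q s t : ℝ} (hh0 : h0 ≠ 1) (hq : m * q = h0 * (1 + m))
    (hq1 : q ≠ 1) (hm : 1 + m ≠ 0) (ha : 1 + m - m * (s * (1 - q) + t * q) ≠ 0)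
    (ht : 1 - h0 * t ≠ 0) :
    (linFrac h0 m (s * (1 - q) + t * q) - linFrac h0 m (t * q)) / (1 - q)
      = s / (1 + m - m * (s * (1 - q) + t * q))
        * (1 / (1 + h0 / (1 - h0) - h0 / (1 - h0) * t)) := by
  have h1q : 1 - q ≠ 0 := sub_ne_zero.mpr hq1.symm
  have h1h0 : 1 - h0 ≠ 0 := sub_ne_zero.mpr hh0.symm
  have hb : 1 + m - m * (t * q) = (1 + m) * (1 - h0 * t) := by linear_combination -t * hq
  have hc : 1 + h0 / (1 - h0) - h0 / (1 - h0) * t = (1 - h0 * t) / (1 - h0) := by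
    field_simp
    ring
  rw [linFrac_sub_linFrac ha (hb ▸ mul_ne_zero hm ht), hb, hc]
  field_simp
  ring

lemma hasDerivAt_linFrac_skeleton_diag {h0 m q : ℝ} (hh0 : h0 ≠ 1)
    (hq : m * q = h0 * (1 + m)) (hq1 : q ≠ 1) (hm : 1 + m ≠ 0) :
    HasDerivAt (fun s => (linFrac h0 m (s * (1 - q) + s * q) - linFrac h0 m (s * q)) / (1 - q))
      (1 + m + h0 / (1 - h0)) 1 := by
  set c := h0 / (1 - h0)
  have hA : ∀ᶠ s in 𝓝 (1:ℝ), 1 + m - m * s ≠ 0 :=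
    (continuous_const.sub (continuous_const.mul continuous_id)).continuousAt.eventually_ne
      (by simp)
  have hB : ∀ᶠ s in 𝓝 (1:ℝ), 1 - h0 * s ≠ 0 :=
    (continuous_const.sub (continuous_const.mul continuous_id)).continuousAt.eventually_ne
      (by simpa using sub_ne_zero.mpr hh0.symm)
  have heq : (fun s => s / (1 + m - m * s) * (1 / (1 + c - c * s))) =ᶠ[𝓝 1]
      fun s => (linFrac h0 m (s * (1 - q) + s * q) - linFrac h0 m (s * q)) / (1 - q) := by
    have diag : ∀ s : ℝ, s * (1 - q) + s * q = s := fun s => by ring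
    filter_upwards [hA, hB] with s hAs hBs
    rw [linFrac_skeleton_eq hh0 hq hq1 hm (by rwa [diag]) hBs, diag]
  have hnum : HasDerivAt (fun s => s / (1 + m - m * s)) (1 + m) 1 :=
    ((hasDerivAt_id' 1).div (((hasDerivAt_id' 1).const_mul m).const_sub (1 + m))
      (by simp)).congr_deriv (by ring)
  have hden : HasDerivAt (fun s => 1 / (1 + c - c * s)) c 1 :=
    ((hasDerivAt_const 1 1).div (((hasDerivAt_id' 1).const_mul c).const_sub (1 + c))
      (by simp)).congr_deriv (by ring)
  exact ((hnum.mul hden).congr_deriv (by ring)).congr_of_eventuallyEq heq.symm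

theorem linear_fractional_skeleton_factorization_general
    (h0 m : ℝ) (hh00 : 0 < h0) (hh01 : h0 < 1) (hm : 0 < m)
    (f : ℝ → ℝ) (hf : ∀ s, f s = h0 + (1 - h0) * s / (1 + m - m * s))
    (q : ℝ) (hq : q = (1 + m - (1 - h0) * (1 + m)) / m) (hq0 : 0 < q) (hq1 : q < 1) :
    (∀ s ∈ Set.Icc (0:ℝ) 1, ∀ t ∈ Set.Icc (0:ℝ) 1,
        (f (s * (1 - q) + t * q) - f (t * q)) / (1 - q)
            = s * (1 / (1 + m - ((1 - h0) * (1 + m) - 1) * s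
                  - (m - ((1 - h0) * (1 + m) - 1)) * t))
              * (1 / (1 + h0 / (1 - h0) - h0 / (1 - h0) * t))
        ∧ (f (s * (1 - q) + t * q) - f (t * q)) / (1 - q)
            = s / (1 + m - m * (s * (1 - q) + t * q))
              * (1 / (1 + h0 / (1 - h0) - h0 / (1 - h0) * t)))
    ∧ (∀ s ∈ Set.Icc (0:ℝ) 1,
        (f (s * (1 - q) + s * q) - f (s * q)) / (1 - q)
          = s / (1 + m - m * s) * (1 / (1 + h0 / (1 - h0) - h0 / (1 - h0) * s)))
    ∧ HasDerivAt (fun s : ℝ => (f (s * (1 - q) + s * q) - f (s * q)) / (1 - q))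
        (1 + m + h0 / (1 - h0)) 1
    ∧ 1 + m + h0 / (1 - h0)
        = (1 - h0) * (1 + m) + ((1 - h0) * (1 + m) + 1) * (h0 / (1 - h0)) := by
  obtain rfl : f = linFrac h0 m := funext hf
  have hmq : m * q = 1 + m - (1 - h0) * (1 + m) := by rw [hq, mul_div_cancel₀ _ hm.ne']
  have hm1 : 1 + m ≠ 0 := by positivity
  have skeleton : ∀ s ∈ Set.Icc (0:ℝ) 1, ∀ t ∈ Set.Icc (0:ℝ) 1,
      (linFrac h0 m (s * (1 - q) + t * q) - linFrac h0 m (t * q)) / (1 - q)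
        = s / (1 + m - m * (s * (1 - q) + t * q))
          * (1 / (1 + h0 / (1 - h0) - h0 / (1 - h0) * t)) := by
    rintro s ⟨hs0, hs1⟩ t ⟨ht0, ht1⟩
    refine linFrac_skeleton_eq hh01.ne (by linear_combination hmq) hq1.ne hm1 ?_ ?_
    · have : s * (1 - q) + t * q ≤ 1 := by nlinarith
      exact (show 0 < 1 + m - m * (s * (1 - q) + t * q) by nlinarith).ne'
    · exact (sub_pos.mpr (by nlinarith : h0 * t < 1)).ne'
  refine ⟨fun s hs t ht => ⟨?_, skeleton s hs t ht⟩, fun s hs => ?_,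
    hasDerivAt_linFrac_skeleton_diag hh01.ne (by linear_combination hmq) hq1.ne hm1, ?_⟩
  · rw [skeleton s hs t ht, ← mul_one_div s]
    congr 3
    linear_combination (s - t) * hmq
  · simpa only [show s * (1 - q) + s * q = s by ring] using skeleton s hs s hs
  · have : 1 - h0 ≠ 0 := sub_ne_zero.mpr hh01.ne'
    field_simp
    ring

/-- for the supercritical linear-fractional law with `M = h₁(1+m) > 1`,
`q = (1+m-M)/m ∈ (0,1)`, `m̂ = h₀/h₁` and `m̃ = M-1`, the skeleton joint generating function
`F(s,t) = (f(s(1-q)+tq) - f(tq))/(1-q)` factorizes as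
`F(s,t) = s · 1/(1+m-m̃s-(m-m̃)t) · 1/(1+m̂-m̂t) = s/(1+m-m(s(1-q)+tq)) · 1/(1+m̂-m̂t)`;
consequently `f̄(s) := F(s,s) = s/(1+m-ms) · 1/(1+m̂-m̂s)` and `f̄'(1) = 1+m+m̂ = M+(M+1)m̂`. -/
theorem linear_fractional_skeleton_factorization
    (h0 m : ℝ) (hh00 : 0 < h0) (hh01 : h0 < 1) (hm : 0 < m)
    (f : ℝ → ℝ) (hf : ∀ s, f s = h0 + (1 - h0) * s / (1 + m - m * s))
    (hM : 1 < (1 - h0) * (1 + m))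
    (q : ℝ) (hq : q = (1 + m - (1 - h0) * (1 + m)) / m) (hq0 : 0 < q) (hq1 : q < 1) :
    (∀ s ∈ Set.Icc (0:ℝ) 1, ∀ t ∈ Set.Icc (0:ℝ) 1,
        (f (s * (1 - q) + t * q) - f (t * q)) / (1 - q)
            = s * (1 / (1 + m - ((1 - h0) * (1 + m) - 1) * s
                  - (m - ((1 - h0) * (1 + m) - 1)) * t))
              * (1 / (1 + h0 / (1 - h0) - h0 / (1 - h0) * t))
        ∧ (f (s * (1 - q) + t * q) - f (t * q)) / (1 - q)
            = s / (1 + m - m * (s * (1 - q) + t * q))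
              * (1 / (1 + h0 / (1 - h0) - h0 / (1 - h0) * t)))
    ∧ (∀ s ∈ Set.Icc (0:ℝ) 1,
        (f (s * (1 - q) + s * q) - f (s * q)) / (1 - q)
          = s / (1 + m - m * s) * (1 / (1 + h0 / (1 - h0) - h0 / (1 - h0) * s)))
    ∧ HasDerivAt (fun s : ℝ => (f (s * (1 - q) + s * q) - f (s * q)) / (1 - q))
        (1 + m + h0 / (1 - h0)) 1
    ∧ 1 + m + h0 / (1 - h0)
        = (1 - h0) * (1 + m) + ((1 - h0) * (1 + m) + 1) * (h0 / (1 - h0)) :=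
  linear_fractional_skeleton_factorization_general h0 m hh00 hh01 hm f hf q hq hq0 hq1
end
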